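/- arXiv:1905.08837 — 7 statements merged into one kernel-verified Lean document; each statement's English description precedes it below -/
import Mathlib

section
/- Let φ: ℝⁿ → ℝ ∪ {∞} be lower semicontinuous around a point x̄ in its domain and calm from below at x̄ with constant ℓ ≥ 0, i.e., there is a neighborhood U of x̄ with φ(x) ≥ φ(x̄) − ℓ‖x − x̄‖ for all x ∈ U. Then the limiting (Mordukhovich) subdifferential of φ at x̄ intersects the closed ball of radius ℓ centered at the origin; in particular, ∂φ(x̄) ≠ ∅. -/
open Filter Topology Metric Set

noncomputable section

abbrev Euc (n : ℕ) := EuclideanSpace ℝ (Fin n)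

def edom {X : Type*} (φ : X → EReal) : Set X := {x | φ x ≠ ⊤}

section NormedDefs

variable {X Y : Type*} [NormedAddCommGroup X] [NormedSpace ℝ X]
  [NormedAddCommGroup Y] [NormedSpace ℝ Y]

/-- Bouligand (contingent) tangent cone. -/
def tangentConeB (Ω : Set X) (x : X) : Set X :=
  {w | ∃ t : ℕ → ℝ, ∃ wk : ℕ → X, (∀ k, 0 < t k) ∧ Tendsto t atTop (𝓝 0) ∧
      Tendsto wk atTop (𝓝 w) ∧ ∀ k, x + t k • wk k ∈ Ω}

/-- Second-order tangent set. -/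
def secondTangent (Ω : Set X) (x w : X) : Set X :=
  {u | ∃ t : ℕ → ℝ, ∃ uk : ℕ → X, (∀ k, 0 < t k) ∧ Tendsto t atTop (𝓝 0) ∧
      Tendsto uk atTop (𝓝 u) ∧ ∀ k, x + t k • w + ((t k) ^ 2 / 2) • uk k ∈ Ω}

/-- Subderivative (first-order epi-derivative). -/
def subderiv (φ : X → EReal) (x w : X) : EReal :=
  liminf (fun p : ℝ × X => ((p.1⁻¹ : ℝ) : EReal) * (φ (x + p.1 • p.2) - φ x))
    ((𝓝[>] (0:ℝ)) ×ˢ 𝓝 w)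

/-- `f` is twice differentiable at `x`: differentiable nearby and its derivative is
differentiable at `x`. -/
def TwiceDiffAt (f : X → Y) (x : X) : Prop :=
  (∀ᶠ y in 𝓝 x, DifferentiableAt ℝ f y) ∧ DifferentiableAt ℝ (fderiv ℝ f) x

/-- The second derivative of `f` at `x` evaluated at `(w, w)`. -/
def D2 (f : X → Y) (x w : X) : Y := fderiv ℝ (fderiv ℝ f) x w w

/-- Lipschitz continuity of `φ` around `x` relative to its domain, with constant `ℓ`. -/
def LipRelDom (φ : X → EReal) (x : X) (ℓ : ℝ) : Prop :=
  ∃ U ∈ 𝓝 x, ∀ y ∈ U, ∀ z ∈ U, φ y ≠ ⊤ → φ z ≠ ⊤ →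
    φ y ≤ φ z + ((ℓ * ‖y - z‖ : ℝ) : EReal)

/-- Metric subregularity of the mapping `x ↦ f x - D` at `(x, 0)` with constant `κ`:
the metric subregularity qualification condition. -/
def MSQCAt (f : X → Y) (D : Set Y) (x : X) (κ : ℝ) : Prop :=
  0 ≤ κ ∧ ∀ᶠ u in 𝓝 x, Metric.infDist u (f ⁻¹' D) ≤ κ * Metric.infDist (f u) D

/-- Epigraph of an extended-real-valued function. -/
def epiSet (ϑ : Y → EReal) : Set (Y × ℝ) := {p | ϑ p.1 ≤ (p.2 : EReal)}

end NormedDefs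

section InnerDefs

variable {X : Type*} [NormedAddCommGroup X] [InnerProductSpace ℝ X]

/-- Regular (Fréchet) subdifferential. -/
def frechetSubdiff (φ : X → EReal) (x : X) : Set X :=
  {v | ∀ ε : ℝ, 0 < ε → ∀ᶠ y in 𝓝 x,
      φ x + (((inner ℝ v (y - x) : ℝ) - ε * ‖y - x‖ : ℝ) : EReal) ≤ φ y}

/-- Limiting (Mordukhovich) subdifferential. -/
def limSubdiff (φ : X → EReal) (x : X) : Set X :=
  {v | ∃ xk : ℕ → X, ∃ vk : ℕ → X, Tendsto xk atTop (𝓝 x) ∧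
      Tendsto (fun k => φ (xk k)) atTop (𝓝 (φ x)) ∧
      Tendsto vk atTop (𝓝 v) ∧ ∀ k, vk k ∈ frechetSubdiff φ (xk k)}

/-- Proximal subdifferential. -/
def proxSubdiff (φ : X → EReal) (x : X) : Set X :=
  {v | ∃ r > (0:ℝ), ∃ γ > (0:ℝ), ∀ y ∈ Metric.ball x γ,
      φ x + (((inner ℝ v (y - x) : ℝ) - r / 2 * ‖y - x‖ ^ 2 : ℝ) : EReal) ≤ φ y}

/-- Second-order difference quotient. -/
def quadDiff (φ : X → EReal) (x v : X) (t : ℝ) (u : X) : EReal :=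
  ((2 / t ^ 2 : ℝ) : EReal) * (φ (x + t • u) - φ x - ((t * (inner ℝ v u : ℝ) : ℝ) : EReal))

/-- Second subderivative of `φ` at `x` for `v`. -/
def secondSubderiv (φ : X → EReal) (x v w : X) : EReal :=
  liminf (fun p : ℝ × X => quadDiff φ x v p.1 p.2) ((𝓝[>] (0:ℝ)) ×ˢ 𝓝 w)

/-- Parabolic subderivative of `φ` at `x` for `w` with respect to `z`. -/
def parabolicSubderiv (φ : X → EReal) (x w z : X) : EReal :=
  liminf (fun p : ℝ × X =>
      ((2 / p.1 ^ 2 : ℝ) : EReal) *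
        (φ (x + p.1 • w + (p.1 ^ 2 / 2) • p.2) - φ x - (p.1 : EReal) * subderiv φ x w))
    ((𝓝[>] (0:ℝ)) ×ˢ 𝓝 z)

/-- Critical cone of `φ` at `x` for `v`. -/
def critCone (φ : X → EReal) (x v : X) : Set X :=
  {w | subderiv φ x w = ((inner ℝ v w : ℝ) : EReal)}

/-- Convex polyhedral set. -/
def IsPolyhedral (Ω : Set X) : Prop :=
  ∃ (k : ℕ) (c : Fin k → X) (b : Fin k → ℝ), Ω = {x | ∀ i, (inner ℝ (c i) x : ℝ) ≤ b i}

/-- Polar cone. -/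
def polarCone (C : Set X) : Set X := {y | ∀ u ∈ C, (inner ℝ y u : ℝ) ≤ 0}

/-- A piecewise linear-quadratic representation of `ϑ`. -/
structure PLQRepr (ϑ : X → EReal) where
  s : ℕ
  piece : Fin s → Set X
  A : Fin s → (X →L[ℝ] X)
  a : Fin s → X
  cst : Fin s → ℝ
  poly : ∀ i, IsPolyhedral (piece i)
  symm : ∀ i x y, (inner ℝ (A i x) y : ℝ) = (inner ℝ x (A i y) : ℝ)
  dom_eq : edom ϑ = ⋃ i, piece i
  val : ∀ i, ∀ x ∈ piece i,
    ϑ x = ((1 / 2 * (inner ℝ (A i x) x : ℝ) + (inner ℝ (a i) x : ℝ) + cst i : ℝ) : EReal)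

/-- `ϑ` is piecewise linear-quadratic. -/
def IsPLQ (ϑ : X → EReal) : Prop := Nonempty (PLQRepr ϑ)

/-- Twice epi-differentiability of `φ` at `x` for `v`, via the recovery-sequence
characterization of epi-convergence of second-order difference quotients. -/
def TwiceEpiDiffAt (φ : X → EReal) (x v : X) : Prop :=
  ∀ w : X, ∀ t : ℕ → ℝ, (∀ k, 0 < t k) → Tendsto t atTop (𝓝 0) →
    ∃ wk : ℕ → X, Tendsto wk atTop (𝓝 w) ∧
      Tendsto (fun k => quadDiff φ x v (t k) (wk k)) atTop (𝓝 (secondSubderiv φ x v w))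

end InnerDefs

/-- Convexity for extended-real-valued functions. -/
def ERealConvexOn {X : Type*} [AddCommGroup X] [Module ℝ X] (φ : X → EReal) : Prop :=
  ∀ x y : X, ∀ t : ℝ, 0 ≤ t → t ≤ 1 →
    φ (t • x + (1 - t) • y) ≤ (t : EReal) * φ x + ((1 - t : ℝ) : EReal) * φ y

/-- The Lagrange multiplier set associated with `(x, v)` for the composition `ϑ ∘ f`. -/
def multSet {n m : ℕ} (f : Euc n → Euc m) (ϑ : Euc m → EReal) (x : Euc n) (v : Euc n) :
    Set (Euc m) :=
  {lam | lam ∈ limSubdiff ϑ (f x) ∧ ContinuousLinearMap.adjoint (fderiv ℝ f x) lam = v}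

/-!
Minimize `φ + (ℓ + ε) √(‖x - x̄‖² + ε⁴)` over a small closed ball around `x̄`. Comparing the
minimizer `x_ε` with `x̄` and using calmness shows `‖x_ε - x̄‖ ≤ (ℓ + ε) ε` and `φ x_ε ≤ φ x̄`;
so `x_ε` is interior and minus the gradient of the smooth penalty, whose norm is at most
`ℓ + ε`, is a regular subgradient of `φ` at `x_ε`. Calmness also forces `φ x_ε → φ x̄`, and by
compactness these subgradients have a limit point as `ε → 0`, a limiting subgradient of norm
at most `ℓ`.
-/

theorem tendsto_comp_of_calm_of_le {X ι : Type*} [SeminormedAddCommGroup X] {φ : X → EReal}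
    {xb : X} {ℓ : ℝ} {l : Filter ι} {xs : ι → X}
    (hcalm : ∀ᶠ x in 𝓝 xb, φ xb ≤ φ x + ((ℓ * ‖x - xb‖ : ℝ) : EReal))
    (hx : Tendsto xs l (𝓝 xb)) (hle : ∀ᶠ k in l, φ (xs k) ≤ φ xb) :
    Tendsto (fun k => φ (xs k)) l (𝓝 (φ xb)) := by
  have hdist : Tendsto (fun k => -(ℓ * ‖xs k - xb‖)) l (𝓝 0) := by
    simpa using ((hx.sub_const xb).norm.const_mul ℓ).neg
  have hlower : Tendsto (fun k => φ xb + ((-(ℓ * ‖xs k - xb‖) : ℝ) : EReal)) l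
      (𝓝 (φ xb + ((0 : ℝ) : EReal))) :=
    (EReal.continuousAt_add (Or.inr (EReal.coe_ne_bot _))
      (Or.inr (EReal.coe_ne_top _))).tendsto.comp
        (tendsto_const_nhds.prodMk_nhds ((continuous_coe_real_ereal.tendsto 0).comp hdist))
  rw [EReal.coe_zero, add_zero] at hlower
  refine tendsto_of_tendsto_of_tendsto_of_le_of_le' hlower tendsto_const_nhds ?_ hle
  filter_upwards [hx.eventually hcalm] with k hk
  rw [EReal.coe_neg, ← sub_eq_add_neg]
  exact EReal.sub_le_of_le_add hk

section InnerProductSpace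

variable {X : Type*} [NormedAddCommGroup X] [InnerProductSpace ℝ X]

theorem neg_mem_frechetSubdiff_of_isLocalMin_add {φ : X → EReal} {h : X → ℝ} {x g : X}
    (hmin : IsLocalMin (fun y => φ y + (h y : EReal)) x) (hh : HasFDerivAt h (innerSL ℝ g) x) :
    -g ∈ frechetSubdiff φ x := by
  intro ε hε
  filter_upwards [hmin, hh.isLittleO.def hε] with y hy hlo
  have hlin : inner ℝ (-g) (y - x) - ε * ‖y - x‖ ≤ h x - h y := by
    rw [inner_neg_left]
    have := (abs_le.1 (Real.norm_eq_abs _ ▸ hlo)).2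
    simp only [innerSL_apply_apply] at this
    linarith
  calc φ x + ((inner ℝ (-g) (y - x) - ε * ‖y - x‖ : ℝ) : EReal)
      ≤ φ x + ((h x - h y : ℝ) : EReal) := by gcongr
    _ = φ x + h x - h y := by rw [EReal.coe_sub, sub_eq_add_neg, sub_eq_add_neg, add_assoc]
    _ ≤ φ y + h y - h y := EReal.sub_le_sub hy le_rfl
    _ = φ y := EReal.add_sub_cancel_right

theorem hasFDerivAt_mul_sqrt_norm_sub_sq_add_sq (a x : X) (c : ℝ) {δ : ℝ} (hδ : δ ≠ 0) :
    HasFDerivAt (fun y => c * √(‖y - a‖ ^ 2 + δ ^ 2))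
      (innerSL ℝ ((c / √(‖x - a‖ ^ 2 + δ ^ 2)) • (x - a))) x := by
  have hpos : 0 < ‖x - a‖ ^ 2 + δ ^ 2 := by positivity
  have hsq : HasFDerivAt (fun y => ‖y - a‖ ^ 2 + δ ^ 2) (2 • innerSL ℝ (x - a)) x := by
    simpa using (((hasFDerivAt_id x).sub_const a).norm_sq).add_const (δ ^ 2)
  refine ((hsq.sqrt hpos.ne').const_mul c).congr_fderiv ?_
  ext w
  have : √(‖x - a‖ ^ 2 + δ ^ 2) ≠ 0 := by positivity
  simp only [map_smul, smul_apply, innerSL_apply_apply, smul_eq_mul, nsmul_eq_mul,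
    Nat.cast_ofNat]
  field_simp

theorem exists_frechetSubdiff_near_of_calm [ProperSpace X] {φ : X → EReal} {xb : X}
    {A ℓ r ε : ℝ} (hA : φ xb = A) (hl : 0 ≤ ℓ)
    (hlsc : LowerSemicontinuousOn φ (closedBall xb r))
    (hcalm : ∀ x ∈ closedBall xb r, φ xb ≤ φ x + ((ℓ * ‖x - xb‖ : ℝ) : EReal))
    (hε : 0 < ε) (hεr : (ℓ + ε) * ε < r) :
    ∃ x, ∃ v ∈ frechetSubdiff φ x, ‖x - xb‖ ≤ (ℓ + ε) * ε ∧ ‖v‖ ≤ ℓ + ε ∧ φ x ≤ φ xb := by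
  set c := ℓ + ε
  set δ := ε ^ 2
  set h : X → ℝ := fun y => c * √(‖y - xb‖ ^ 2 + δ ^ 2)
  have hc : 0 < c := by positivity
  have hδ : 0 < δ := by positivity
  have hxb : xb ∈ closedBall xb r := mem_closedBall_self (by nlinarith)
  have hψ : LowerSemicontinuousOn (fun y => φ y + (h y : EReal)) (closedBall xb r) := by
    intro y hy
    have hh : Continuous h := by fun_prop
    exact LowerSemicontinuousWithinAt.add' (hlsc y hy)
      (continuous_coe_real_ereal.comp hh).continuousWithinAt.lowerSemicontinuousWithinAt
      (EReal.continuousAt_add (Or.inr (EReal.coe_ne_bot _)) (Or.inr (EReal.coe_ne_top _)))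
  obtain ⟨x, hx, hmin⟩ := hψ.exists_isMinOn ⟨xb, hxb⟩ (isCompact_closedBall xb r)
  set t := ‖x - xb‖
  set s := √(t ^ 2 + δ ^ 2)
  have hmin_xb : φ x + ((c * s : ℝ) : EReal) ≤ ((A + c * δ : ℝ) : EReal) := by
    simpa [h, hA, Real.sqrt_sq hδ.le] using hmin hxb
  have hcalm_x : φ xb ≤ φ x + ((ℓ * t : ℝ) : EReal) := hcalm x hx
  obtain ⟨B, hB⟩ : ∃ B : ℝ, φ x = B := by
    induction hφx : φ x using EReal.rec with
    | bot => simp [hφx, hA] at hcalm_x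
    | top =>
      rw [hφx, EReal.top_add_coe, top_le_iff] at hmin_xb
      exact absurd hmin_xb (EReal.coe_ne_top _)
    | coe B => exact ⟨B, rfl⟩
  rw [hB] at hmin_xb hcalm_x
  rw [hA] at hcalm_x
  have hmin_real : B + c * s ≤ A + c * δ := by exact_mod_cast hmin_xb
  have hcalm_real : A ≤ B + ℓ * t := by exact_mod_cast hcalm_x
  have hts : t ≤ s := Real.le_sqrt_of_sq_le (by nlinarith)
  have hδs : δ ≤ s := Real.le_sqrt_of_sq_le (by nlinarith [sq_nonneg t])
  have hs : 0 < s := hδ.trans_le hδs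
  -- `c * t ≤ c * s ≤ c * δ + ℓ * t`, so that `ε * t ≤ c * ε ^ 2`
  have ht : t ≤ c * ε := by
    have : ε * t ≤ ε * (c * ε) := by nlinarith
    exact le_of_mul_le_mul_left this hε
  have hx_ball : x ∈ ball xb r := mem_ball_iff_norm.2 (ht.trans_lt hεr)
  refine ⟨x, _, neg_mem_frechetSubdiff_of_isLocalMin_add
    (hmin.isLocalMin (closedBall_mem_nhds_of_mem hx_ball))
    (hasFDerivAt_mul_sqrt_norm_sub_sq_add_sq xb x c hδ.ne'), ht, ?_, ?_⟩
  · rw [norm_neg, norm_smul, Real.norm_of_nonneg (by positivity), div_mul_eq_mul_div,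
      div_le_iff₀ hs]
    exact mul_le_mul_of_nonneg_left hts hc.le
  · rw [hB, hA]
    exact_mod_cast (by nlinarith : B ≤ A)

theorem exists_mem_limSubdiff_norm_le_of_tendsto [ProperSpace X] {φ : X → EReal} {xb : X}
    {ℓ : ℝ} {xs vs : ℕ → X} {εs : ℕ → ℝ} (hx : Tendsto xs atTop (𝓝 xb))
    (hφ : Tendsto (fun k => φ (xs k)) atTop (𝓝 (φ xb)))
    (hv : ∀ k, vs k ∈ frechetSubdiff φ (xs k)) (hvε : ∀ k, ‖vs k‖ ≤ ℓ + εs k)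
    (hε : Tendsto εs atTop (𝓝 0)) :
    ∃ v ∈ limSubdiff φ xb, ‖v‖ ≤ ℓ := by
  obtain ⟨M, hM⟩ := hε.bddAbove_range
  have hbdd : ∀ k, vs k ∈ closedBall 0 (ℓ + M) := fun k =>
    mem_closedBall_zero_iff.2 ((hvε k).trans (by gcongr; exact hM ⟨k, rfl⟩))
  obtain ⟨v, -, σ, hσ, hvσ⟩ := tendsto_subseq_of_bounded isBounded_closedBall hbdd
  refine ⟨v, ⟨xs ∘ σ, vs ∘ σ, hx.comp hσ.tendsto_atTop, hφ.comp hσ.tendsto_atTop, hvσ,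
    fun k => hv (σ k)⟩, ?_⟩
  have hlim := hvσ.norm.sub (hε.comp hσ.tendsto_atTop)
  rw [sub_zero] at hlim
  exact le_of_tendsto hlim (Eventually.of_forall fun k => by
    simp only [Function.comp_apply]; linarith [hvε (σ k)])

end InnerProductSpace

/-- existence of subgradients under calmness from below. -/
theorem stmt0 {n : ℕ} (φ : Euc n → EReal) (xb : Euc n) (ℓ : ℝ)
    (hl : 0 ≤ ℓ) (hbot : ∀ x, φ x ≠ ⊥) (hdom : φ xb ≠ ⊤)
    (hlsc : ∃ U ∈ 𝓝 xb, ∀ y ∈ U, LowerSemicontinuousAt φ y)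
    (hcalm : ∀ᶠ x in 𝓝 xb, φ xb ≤ φ x + ((ℓ * ‖x - xb‖ : ℝ) : EReal)) :
    ∃ v ∈ limSubdiff φ xb, ‖v‖ ≤ ℓ := by
  obtain ⟨U, hU, hlscU⟩ := hlsc
  obtain ⟨r, hr0, hr⟩ := nhds_basis_closedBall.mem_iff.1 (inter_mem hU hcalm)
  have hA : φ xb = ((φ xb).toReal : EReal) := (EReal.coe_toReal hdom (hbot xb)).symm
  have hradius : Tendsto (fun ε : ℝ => (ℓ + ε) * ε) (𝓝 0) (𝓝 0) := by
    have : Continuous fun ε : ℝ => (ℓ + ε) * ε := by fun_prop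
    simpa using this.tendsto 0
  obtain ⟨ε₀, hε₀, hε₀r⟩ :=
    Metric.eventually_nhds_iff.1 (hradius.eventually (gt_mem_nhds hr0))
  obtain ⟨εs, -, hεs, hεs0⟩ := exists_seq_strictAnti_tendsto' hε₀
  choose xs vs hvs hxs hvε hφle using fun k =>
    exists_frechetSubdiff_near_of_calm hA hl
      (fun y hy => (hlscU y (hr hy).1).lowerSemicontinuousWithinAt _) (fun x hx => (hr hx).2)
      (hεs k).1 (hε₀r (by rw [Real.dist_0_eq_abs, abs_of_pos (hεs k).1]; exact (hεs k).2))
  have hxs_tend : Tendsto xs atTop (𝓝 xb) :=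
    tendsto_iff_norm_sub_tendsto_zero.2
      (squeeze_zero (fun _ => norm_nonneg _) hxs (hradius.comp hεs0))
  exact exists_mem_limSubdiff_norm_le_of_tendsto hxs_tend
    (tendsto_comp_of_calm_of_le hcalm hxs_tend (Eventually.of_forall hφle)) hvs hvε
    hεs0
end
end

section
/- Every convex piecewise linear-quadratic function φ: ℝⁿ → ℝ ∪ {∞} is calm from below at every point of its domain; consequently ∂φ(x̄) ≠ ∅ for every x̄ ∈ dom φ. -/
open Filter Topology Metric Set

noncomputable section

/-!
Near `xb` only the finitely many closed pieces that contain `xb` meet a small ball, and on each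
of them `φ` is a smooth quadratic, hence Lipschitz near `xb`: this gives calmness from below,
without convexity. For convex `φ` the calmness estimate holds globally, since moving `y` towards
`xb` along a segment scales both sides by the same factor. The epigraph of `φ` is then disjoint
from the open convex set `{(x, r) | r + ℓ ‖x - xb‖ < φ xb}`; a hyperplane separating them cannot be
vertical, because `(xb, φ xb)` lies in the epigraph and in the closure of that set. It is the
graph of an affine minorant of `φ` that is exact at `xb`, whose slope is a Fréchet, hence
limiting, subgradient.
-/

theorem IsPolyhedral.isClosed {X : Type*} [NormedAddCommGroup X] [InnerProductSpace ℝ X]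
    {Ω : Set X} (h : IsPolyhedral Ω) : IsClosed Ω := by
  obtain ⟨k, c, b, rfl⟩ := h
  simp only [ofPred_forall]
  exact isClosed_iInter fun i => isClosed_le (continuous_const.inner continuous_id) continuous_const

theorem eventually_forall_mem_imp_mem {X ι : Type*} [TopologicalSpace X] [Finite ι]
    {S : ι → Set X} (hS : ∀ i, IsClosed (S i)) (x : X) :
    ∀ᶠ y in 𝓝 x, ∀ i, y ∈ S i → x ∈ S i := by
  refine eventually_all.2 fun i => ?_
  by_cases hx : x ∈ S i
  · exact .of_forall fun _ _ => hx
  · filter_upwards [(hS i).isOpen_compl.mem_nhds hx] with y hy hyS using absurd hyS hy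

section PLQ

variable {X : Type*} [NormedAddCommGroup X] [InnerProductSpace ℝ X] {φ : X → EReal}

namespace PLQRepr

def quad (R : PLQRepr φ) (i : Fin R.s) (x : X) : ℝ :=
  1 / 2 * (inner ℝ (R.A i x) x : ℝ) + (inner ℝ (R.a i) x : ℝ) + R.cst i

theorem contDiff_quad (R : PLQRepr φ) (i : Fin R.s) : ContDiff ℝ 1 (R.quad i) :=
  (contDiff_const.mul ((R.A i).contDiff.inner ℝ contDiff_id)).add
    (contDiff_const.inner ℝ contDiff_id) |>.add contDiff_const

theorem calm_from_below (R : PLQRepr φ) (xb : X) :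
    ∃ ℓ : ℝ, 0 ≤ ℓ ∧ ∀ᶠ x in 𝓝 xb, φ xb ≤ φ x + ((ℓ * ‖x - xb‖ : ℝ) : EReal) := by
  choose K U hU hLip using fun i =>
    ((R.contDiff_quad i).contDiffAt (x := xb)).exists_lipschitzOnWith
  refine ⟨∑ i, (K i : ℝ), by positivity, ?_⟩
  filter_upwards [eventually_all.2 hU,
    eventually_forall_mem_imp_mem (fun i => (R.poly i).isClosed) xb] with x hxU hx_piece
  by_cases hxt : φ x = ⊤
  · rw [hxt, EReal.top_add_of_ne_bot (EReal.coe_ne_bot _)]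
    exact le_top
  obtain ⟨j, hxj⟩ := mem_iUnion.1 (R.dom_eq ▸ hxt : x ∈ ⋃ i, R.piece i)
  have hxbj := hx_piece j hxj
  have hdist : R.quad j xb - R.quad j x ≤ K j * ‖x - xb‖ := by
    have := (hLip j).dist_le_mul xb (mem_of_mem_nhds (hU j)) x (hxU j)
    rw [Real.dist_eq, dist_comm, dist_eq_norm] at this
    exact (le_abs_self _).trans this
  have hK : (K j : ℝ) ≤ ∑ i, (K i : ℝ) :=
    Finset.single_le_sum (fun i _ => NNReal.coe_nonneg (K i)) (Finset.mem_univ j)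
  rw [R.val j x hxj, R.val j xb hxbj, ← EReal.coe_add, EReal.coe_le_coe_iff]
  change R.quad j xb ≤ R.quad j x + _
  nlinarith [norm_nonneg (x - xb)]

end PLQRepr

end PLQ

theorem convex_setOf_add_mul_norm_sub_lt {X : Type*} [NormedAddCommGroup X] [NormedSpace ℝ X]
    (xb : X) {ℓ : ℝ} (hℓ : 0 ≤ ℓ) (m : ℝ) :
    Convex ℝ {p : X × ℝ | p.2 + ℓ * ‖p.1 - xb‖ < m} := by
  have hdist := (convexOn_dist xb convex_univ).comp_linearMap (LinearMap.fst ℝ X ℝ)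
  simp only [Function.comp_def, dist_eq_norm, preimage_univ, LinearMap.fst_apply] at hdist
  simpa using (((LinearMap.snd ℝ X ℝ).convexOn convex_univ).add (hdist.smul hℓ)).convex_lt m

namespace ERealConvexOn

variable {X : Type*} [NormedAddCommGroup X] [NormedSpace ℝ X] {φ : X → EReal}

theorem convex_epiSet (hφ : ERealConvexOn φ) : Convex ℝ (epiSet φ) := by
  rintro p (hp : φ p.1 ≤ p.2) q (hq : φ q.1 ≤ q.2) a b ha hb hab
  obtain rfl : b = 1 - a := by linarith
  show φ (a • p.1 + (1 - a) • q.1) ≤ ((a * p.2 + (1 - a) * q.2 : ℝ) : EReal)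
  calc φ (a • p.1 + (1 - a) • q.1) ≤ (a : EReal) * φ p.1 + ((1 - a : ℝ) : EReal) * φ q.1 :=
        hφ p.1 q.1 a ha (by linarith)
    _ ≤ (a : EReal) * p.2 + ((1 - a : ℝ) : EReal) * q.2 :=
        add_le_add (mul_le_mul_of_nonneg_left hp (EReal.coe_nonneg.2 ha))
          (mul_le_mul_of_nonneg_left hq (EReal.coe_nonneg.2 hb))
    _ = _ := by push_cast; rfl

theorem le_add_norm_of_eventually (hφ : ERealConvexOn φ) (hbot : ∀ x, φ x ≠ ⊥) {xb : X}
    (hxb : φ xb ≠ ⊤) {ℓ : ℝ}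
    (hcalm : ∀ᶠ x in 𝓝 xb, φ xb ≤ φ x + ((ℓ * ‖x - xb‖ : ℝ) : EReal)) (y : X) :
    φ xb ≤ φ y + ((ℓ * ‖y - xb‖ : ℝ) : EReal) := by
  by_cases hy : φ y = ⊤
  · rw [hy, EReal.top_add_of_ne_bot (EReal.coe_ne_bot _)]
    exact le_top
  have hpath : Tendsto (fun t : ℝ => t • y + (1 - t) • xb) (𝓝[>] 0) (𝓝 xb) := by
    refine tendsto_nhdsWithin_of_tendsto_nhds ?_
    have : Continuous fun t : ℝ => t • y + (1 - t) • xb := by fun_prop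
    simpa using this.tendsto 0
  obtain ⟨t, ht_calm, ht⟩ := ((hpath.eventually hcalm).and (Ioo_mem_nhdsGT one_pos)).exists
  have hnorm : ‖t • y + (1 - t) • xb - xb‖ = t * ‖y - xb‖ := by
    rw [show t • y + (1 - t) • xb - xb = t • (y - xb) by module, norm_smul,
      Real.norm_of_nonneg ht.1.le]
  have hchain := ht_calm.trans (add_le_add_left (hφ y xb t ht.1.le ht.2.le) _)
  rw [hnorm] at hchain
  lift φ xb to ℝ using ⟨hxb, hbot xb⟩ with m
  lift φ y to ℝ using ⟨hy, hbot y⟩ with r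
  norm_cast at hchain ⊢
  nlinarith [ht.1]

theorem exists_affine_minorant_of_le_add_norm (hφ : ERealConvexOn φ) (hbot : ∀ x, φ x ≠ ⊥)
    {xb : X} (hxb : φ xb ≠ ⊤) {ℓ : ℝ} (hℓ : 0 ≤ ℓ)
    (hcalm : ∀ y, φ xb ≤ φ y + ((ℓ * ‖y - xb‖ : ℝ) : EReal)) :
    ∃ g : X →L[ℝ] ℝ, ∀ y, φ xb + ((g (y - xb) : ℝ) : EReal) ≤ φ y := by
  lift φ xb to ℝ using ⟨hxb, hbot xb⟩ with m hm
  set K : Set (X × ℝ) := {p | p.2 + ℓ * ‖p.1 - xb‖ < m}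
  have hK_open : IsOpen K := isOpen_lt (by fun_prop) continuous_const
  have hdisj : Disjoint K (epiSet φ) := by
    refine disjoint_left.2 fun p (hpK : _ < m) (hpD : φ p.1 ≤ p.2) => ?_
    have := (hcalm p.1).trans (add_le_add_left hpD _)
    norm_cast at this
    linarith
  obtain ⟨f, u, hfK, hfD⟩ := geometric_hahn_banach_open
    (convex_setOf_add_mul_norm_sub_lt xb hℓ m) hK_open hφ.convex_epiSet hdisj
  have hf : ∀ x r, f (x, r) = f (x, 0) + r * f (0, 1) := fun x r => by
    rw [← smul_eq_mul, ← map_smul, ← map_add, Prod.smul_mk, smul_zero, smul_eq_mul, mul_one,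
      Prod.mk_add_mk, add_zero, zero_add]
  have hbelow : ∀ ε > 0, f (xb, 0) + (m - ε) * f (0, 1) < u := fun ε hε => by
    rw [← hf]; exact hfK _ (by simp [hε])
  have habove : ∀ y (r : ℝ), φ y ≤ r → u ≤ f (y, 0) + r * f (0, 1) := fun y r hy => by
    rw [← hf]; exact hfD (y, r) hy
  have hc : 0 < f (0, 1) := by
    have := (hbelow 1 one_pos).trans_le (habove xb m hm.ge)
    nlinarith
  refine ⟨-(f (0, 1))⁻¹ • (f.comp (.inl ℝ X ℝ)), fun y => ?_⟩
  by_cases hy : φ y = ⊤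
  · rw [hy]; exact le_top
  lift φ y to ℝ using ⟨hy, hbot y⟩ with r hr
  have hgap : f (xb, 0) + m * f (0, 1) ≤ f (y, 0) + r * f (0, 1) :=
    le_of_forall_pos_lt_add fun ε hε => by
      have := hbelow (ε / f (0, 1)) (div_pos hε hc)
      have := habove y r hr.ge
      rw [sub_mul, div_mul_cancel₀ _ hc.ne'] at *
      linarith
  have hsub : f (y - xb, 0) = f (y, 0) - f (xb, 0) := by
    rw [← map_sub, Prod.mk_sub_mk, sub_zero]
  norm_cast
  simp only [smul_apply, ContinuousLinearMap.comp_apply,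
    ContinuousLinearMap.inl_apply, hsub, smul_eq_mul]
  rw [neg_mul, ← sub_eq_add_neg, sub_le_iff_le_add, ← sub_le_iff_le_add',
    le_inv_mul_iff₀ hc]
  linarith

end ERealConvexOn

section Subdiff

variable {X : Type*} [NormedAddCommGroup X] [InnerProductSpace ℝ X] {φ : X → EReal}

theorem mem_frechetSubdiff_of_forall_le {x v : X}
    (h : ∀ y, φ x + ((inner ℝ v (y - x) : ℝ) : EReal) ≤ φ y) : v ∈ frechetSubdiff φ x :=
  fun _ hε => .of_forall fun y => (add_le_add_right (EReal.coe_le_coe_iff.2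
    (sub_le_self _ (mul_nonneg hε.le (norm_nonneg _)))) _).trans (h y)

theorem frechetSubdiff_subset_limSubdiff (x : X) : frechetSubdiff φ x ⊆ limSubdiff φ x :=
  fun v hv => ⟨fun _ => x, fun _ => v, tendsto_const_nhds, tendsto_const_nhds,
    tendsto_const_nhds, fun _ => hv⟩

end Subdiff

/-- convex piecewise linear-quadratic functions are calm from below at
every point of their domain, and hence subdifferentiable there. -/
theorem stmt1 {n : ℕ} (φ : Euc n → EReal) (hbot : ∀ x, φ x ≠ ⊥)
    (hplq : IsPLQ φ) (hconv : ERealConvexOn φ) :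
    ∀ xb : Euc n, φ xb ≠ ⊤ →
      (∃ ℓ : ℝ, 0 ≤ ℓ ∧ ∀ᶠ x in 𝓝 xb, φ xb ≤ φ x + ((ℓ * ‖x - xb‖ : ℝ) : EReal)) ∧
      (limSubdiff φ xb).Nonempty := by
  intro xb hxb
  obtain ⟨R⟩ := hplq
  obtain ⟨ℓ, hℓ, hcalm⟩ := R.calm_from_below xb
  refine ⟨⟨ℓ, hℓ, hcalm⟩, ?_⟩
  obtain ⟨g, hg⟩ := hconv.exists_affine_minorant_of_le_add_norm hbot hxb hℓ
    (hconv.le_add_norm_of_eventually hbot hxb hcalm)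
  refine ⟨(InnerProductSpace.toDual ℝ (Euc n)).symm g, frechetSubdiff_subset_limSubdiff xb
    (mem_frechetSubdiff_of_forall_le fun y => ?_)⟩
  simpa only [InnerProductSpace.toDual_symm_apply] using hg y
end
end

section
/- Let f: ℝⁿ → ℝᵐ be differentiable at x̄ and ϑ: ℝᵐ → ℝ ∪ {∞} be continuous relative to its domain with ϑ(f(x̄)) finite. If the epigraphical mapping H(x,α) = (f(x),α) − epi ϑ is metrically subregular at ((x̄, ϑ(f(x̄))), (0,0)), then the domain mapping G(x) = f(x) − dom ϑ is metrically subregular at (x̄, 0). -/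
/-!
Pick a level `s > ϑ(f x̄)` so close to `ϑ(f x̄)` that the subregularity estimate of `H` holds at
`(x, s)` for all `x` near `x̄`. By continuity of `ϑ` relative to its domain, every point of
`dom ϑ` near `f x̄` lies in the sublevel set `{ϑ < s}`, so for `x` near `x̄` the distance from
`(f x, s)` to `epi ϑ` is at most the distance from `f x` to `dom ϑ`. Projecting the epigraphical
preimage onto its first factor lands in `f⁻¹(dom ϑ)`, which gives the estimate for `G`.
-/

open Filter Topology Metric Set

noncomputable section

section InfDist

variable {α β : Type*} [PseudoMetricSpace α] [PseudoMetricSpace β]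

theorem LipschitzWith.infDist_le_of_mapsTo {Φ : α → β} (hΦ : LipschitzWith 1 Φ)
    {s : Set α} {t : Set β} (hst : MapsTo Φ s t) (hs : s.Nonempty) (x : α) :
    infDist (Φ x) t ≤ infDist x s :=
  (le_infDist hs).2 fun _ hy =>
    (infDist_le_dist_of_mem (hst hy)).trans (by simpa using hΦ.dist_le_mul x _)

theorem Metric.infDist_le_infDist_of_ball_inter_subset {s t : Set α} {c x : α} {δ : ℝ}
    (hc : c ∈ s) (hst : ball c δ ∩ s ⊆ t) (hx : dist x c < δ / 2) :
    infDist x t ≤ infDist x s := by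
  refine le_of_forall_gt_imp_ge_of_dense fun d hd => ?_
  have hlt : infDist x s < min d (δ / 2) :=
    lt_min hd ((infDist_le_dist_of_mem hc).trans_lt hx)
  obtain ⟨y, hys, hxy⟩ := (infDist_lt_iff ⟨c, hc⟩).1 hlt
  have hyc : y ∈ ball c δ := by
    rw [mem_ball]
    linarith [dist_triangle y x c, dist_comm x y, min_le_right d (δ / 2)]
  exact (infDist_le_dist_of_mem (hst ⟨hyc, hys⟩)).trans (hxy.le.trans (min_le_left _ _))

end InfDist

theorem stmt3_general {n m : ℕ} (f : Euc n → Euc m) (ϑ : Euc m → EReal) (xb : Euc n) (r : ℝ)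
    (hf : DifferentiableAt ℝ f xb)
    (hfin : ϑ (f xb) = (r : EReal))
    (hcont : ContinuousOn ϑ (edom ϑ))
    (hH : ∃ κ : ℝ, 0 ≤ κ ∧ ∀ᶠ p : Euc n × ℝ in 𝓝 (xb, r),
      Metric.infDist p {q : Euc n × ℝ | (f q.1, q.2) ∈ epiSet ϑ} ≤
        κ * Metric.infDist (f p.1, p.2) (epiSet ϑ)) :
    ∃ κ : ℝ, MSQCAt f (edom ϑ) xb κ := by
  obtain ⟨κ, hκ, hev⟩ := hH
  refine ⟨κ, hκ, ?_⟩
  have hxb_epi : (f xb, r) ∈ epiSet ϑ := hfin.le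
  have hfxb : f xb ∈ edom ϑ := ne_top_of_le_ne_top (EReal.coe_ne_top r) hxb_epi
  rw [nhds_prod_eq] at hev
  obtain ⟨P, hP, Q, hQ, hPQ⟩ := eventually_prod_iff.1 hev
  obtain ⟨s, hQs, hrs⟩ :=
    ((hQ.filter_mono nhdsWithin_le_nhds).and (self_mem_nhdsWithin (s := Ioi r))).exists
  obtain ⟨δ, hδ, hsub⟩ := mem_nhdsWithin_iff.1 <| hcont _ hfxb <|
    Iio_mem_nhds (show ϑ (f xb) < (s : EReal) by rw [hfin]; exact_mod_cast hrs)
  have hproj : MapsTo Prod.fst {q : Euc n × ℝ | (f q.1, q.2) ∈ epiSet ϑ} (f ⁻¹' edom ϑ) :=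
    fun q hq => ne_top_of_le_ne_top (EReal.coe_ne_top q.2) hq
  have hlift : MapsTo (·, s) {y | ϑ y < s} (epiSet ϑ) :=
    fun y hy => show ϑ y ≤ s from hy.le
  filter_upwards [hP, hf.continuousAt.eventually (ball_mem_nhds (f xb) (half_pos hδ))]
    with x hPx hfx
  have hfst := LipschitzWith.prod_fst.infDist_le_of_mapsTo hproj ⟨(xb, r), hxb_epi⟩ (x, s)
  have hsnd := (LipschitzWith.prodMk_right s).infDist_le_of_mapsTo hlift
    ⟨f xb, hsub ⟨mem_ball_self hδ, hfxb⟩⟩ (f x)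
  calc infDist x (f ⁻¹' edom ϑ)
      ≤ infDist (x, s) {q : Euc n × ℝ | (f q.1, q.2) ∈ epiSet ϑ} := hfst
    _ ≤ κ * infDist (f x, s) (epiSet ϑ) := hPQ hPx hQs
    _ ≤ κ * infDist (f x) {y | ϑ y < s} := mul_le_mul_of_nonneg_left hsnd hκ
    _ ≤ κ * infDist (f x) (edom ϑ) :=
        mul_le_mul_of_nonneg_left (infDist_le_infDist_of_ball_inter_subset hfxb hsub hfx) hκ

/-- metric subregularity of the epigraphical mapping implies metric
subregularity of the domain mapping. -/
theorem stmt3 {n m : ℕ} (f : Euc n → Euc m) (ϑ : Euc m → EReal) (xb : Euc n) (r : ℝ)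
    (hf : DifferentiableAt ℝ f xb) (hbot : ∀ y, ϑ y ≠ ⊥)
    (hfin : ϑ (f xb) = (r : EReal))
    (hcont : ContinuousOn ϑ (edom ϑ))
    (hH : ∃ κ : ℝ, 0 ≤ κ ∧ ∀ᶠ p : Euc n × ℝ in 𝓝 (xb, r),
      Metric.infDist p {q : Euc n × ℝ | (f q.1, q.2) ∈ epiSet ϑ} ≤
        κ * Metric.infDist (f p.1, p.2) (epiSet ϑ)) :
    ∃ κ : ℝ, MSQCAt f (edom ϑ) xb κ :=
  stmt3_general f ϑ xb r hf hfin hcont hH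
end
end

section
/- Let f: ℝⁿ → ℝᵐ be differentiable at x̄ and ϑ: ℝᵐ → ℝ ∪ {∞} be Lipschitz continuous around f(x̄) relative to its domain with ϑ(f(x̄)) finite. If the mapping x ↦ f(x) − dom ϑ is metrically subregular at (x̄, 0), then the subderivative chain rule holds as an equality: d(ϑ∘f)(x̄)(w) = dϑ(f(x̄))(∇f(x̄)w) for all w ∈ ℝⁿ. -/
open Filter Topology Metric Set

noncomputable section

/-!
Differentiability alone gives `dϑ(f x̄)(∇f(x̄) w) ≤ d(ϑ ∘ f)(x̄)(w)`: the difference quotient of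
`ϑ ∘ f` at `(t, u)` is the difference quotient of `ϑ` at `(t, (f(x̄ + t u) - f(x̄)) / t)`.

Conversely, let `(t, z) → (0⁺, ∇f(x̄) w)` with `f(x̄) + t z ∈ dom ϑ` (elsewhere the quotient of `ϑ`
is `⊤`). Metric subregularity at `x̄ + t w` yields `u` with `x̄ + t u ∈ f⁻¹(dom ϑ)` and
`‖u - w‖ ≤ κ ‖(f(x̄ + t w) - f(x̄)) / t - z‖ + t → 0`, and Lipschitz continuity of `ϑ` on its domain
bounds the quotient of `ϑ ∘ f` at `(t, u)` by the quotient of `ϑ` at `(t, z)` plus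
`ℓ ‖(f(x̄ + t u) - f(x̄)) / t - z‖ → 0`.
-/

lemma liminf_le_liminf_of_le_add {α β : Type*} {F : Filter α} {G : Filter β} [G.NeBot]
    {g : β → α} (hg : Tendsto g G F) {u : α → EReal} {v : β → EReal} {ε : β → ℝ}
    (hε : Tendsto ε G (𝓝 0)) (h : ∀ᶠ b in G, u (g b) ≤ v b + ε b) :
    liminf u F ≤ liminf v G := by
  have hε' : limsup (fun b => (ε b : EReal)) G = 0 :=
    (continuous_coe_real_ereal.tendsto 0 |>.comp hε).limsup_eq
  calc liminf u F ≤ liminf (u ∘ g) G := hg.liminf_le_liminf_comp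
    _ ≤ liminf ((fun b => (ε b : EReal)) + v) G :=
        liminf_le_liminf (h.mono fun b hb => by rwa [Pi.add_apply, add_comm])
    _ ≤ limsup (fun b => (ε b : EReal)) G + liminf v G :=
        EReal.liminf_add_le (by simp [hε']) (by simp [hε'])
    _ = liminf v G := by rw [hε', zero_add]

lemma EReal.coe_inv_mul_sub_le {t r : ℝ} (ht : 0 < t) {a b c : EReal} (hc : c ≠ ⊤)
    (hc' : c ≠ ⊥) (h : a ≤ b + r) :
    ((t⁻¹ : ℝ) : EReal) * (a - c) ≤ ((t⁻¹ : ℝ) : EReal) * (b - c) + ((t⁻¹ * r : ℝ) : EReal) := by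
  lift c to ℝ using ⟨hc, hc'⟩
  have ht' : 0 < t⁻¹ := inv_pos.2 ht
  induction b using EReal.rec with
  | bot =>
    rw [show a = ⊥ by simpa using h, EReal.bot_sub, EReal.coe_mul_bot_of_pos ht']
    exact bot_le
  | top =>
    rw [EReal.top_sub_coe, EReal.coe_mul_top_of_pos ht', EReal.top_add_coe]
    exact le_top
  | coe b =>
    induction a using EReal.rec with
    | bot => rw [EReal.bot_sub, EReal.coe_mul_bot_of_pos ht']; exact bot_le
    | top => exact absurd h (by norm_cast)
    | coe a =>
      norm_cast at h ⊢
      rw [← mul_add]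
      gcongr
      linarith

lemma eventually_pos_fst_nhdsGT_prod {α : Type*} (l : Filter α) :
    ∀ᶠ p : ℝ × α in 𝓝[>] 0 ×ˢ l, 0 < p.1 :=
  tendsto_fst.eventually self_mem_nhdsWithin

lemma MSQCAt.eventually_exists_near_preimage {X Y : Type*} [NormedAddCommGroup X]
    [NormedAddCommGroup Y] {f : X → Y} {D : Set Y} {x : X} {κ : ℝ}
    (h : MSQCAt f D x κ) (hx : f x ∈ D) :
    ∀ᶠ u in 𝓝 x, ∀ y ∈ D, ∀ δ > 0, ∃ u' ∈ f ⁻¹' D, ‖u' - u‖ < κ * ‖f u - y‖ + δ := by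
  filter_upwards [h.2] with u hu y hy δ hδ
  have hlt : infDist u (f ⁻¹' D) < κ * ‖f u - y‖ + δ :=
    calc infDist u (f ⁻¹' D) ≤ κ * infDist (f u) D := hu
      _ ≤ κ * ‖f u - y‖ := by
          gcongr
          · exact h.1
          · exact dist_eq_norm (f u) y ▸ infDist_le_dist_of_mem hy
      _ < κ * ‖f u - y‖ + δ := lt_add_of_pos_right _ hδ
  obtain ⟨u', hu', hd⟩ := (infDist_lt_iff ⟨x, hx⟩).1 hlt
  exact ⟨u', hu', by rwa [dist_comm, dist_eq_norm] at hd⟩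

section Subderivative

variable {X Y : Type*} [NormedAddCommGroup X] [NormedSpace ℝ X]
  [NormedAddCommGroup Y] [NormedSpace ℝ Y]

lemma DifferentiableAt.tendsto_slope_fderiv {f : X → Y} {x : X} (hf : DifferentiableAt ℝ f x)
    (w : X) :
    Tendsto (fun p : ℝ × X => p.1⁻¹ • (f (x + p.1 • p.2) - f x)) (𝓝[>] 0 ×ˢ 𝓝 w)
      (𝓝 (fderiv ℝ f x w)) := by
  have ht : Tendsto (fun p : ℝ × X => p.1) (𝓝[>] 0 ×ˢ 𝓝 w) (𝓝 0) :=
    tendsto_fst.mono_right nhdsWithin_le_nhds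
  refine (hasFDerivWithinAt_univ.2 hf.hasFDerivAt).lim ?_ (.of_forall fun _ => mem_univ _) ?_
  · simpa using ht.smul (tendsto_snd (f := 𝓝[>] (0 : ℝ)))
  · refine tendsto_snd.congr' ?_
    filter_upwards [eventually_pos_fst_nhdsGT_prod (𝓝 w)] with p hp
    rw [inv_smul_smul₀ hp.ne']

theorem subderiv_le_subderiv_comp {f : X → Y} {x : X} (hf : DifferentiableAt ℝ f x)
    (φ : Y → EReal) (w : X) :
    subderiv φ (f x) (fderiv ℝ f x w) ≤ subderiv (fun u => φ (f u)) x w := by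
  have hg : Tendsto (fun p : ℝ × X => (p.1, p.1⁻¹ • (f (x + p.1 • p.2) - f x)))
      (𝓝[>] 0 ×ˢ 𝓝 w) (𝓝[>] 0 ×ˢ 𝓝 (fderiv ℝ f x w)) :=
    tendsto_fst.prodMk (hf.tendsto_slope_fderiv w)
  refine hg.liminf_le_liminf_comp.trans (liminf_le_liminf ?_)
  filter_upwards [eventually_pos_fst_nhdsGT_prod (𝓝 w)] with p hp
  simp [smul_inv_smul₀ hp.ne']

lemma MSQCAt.exists_tendsto_mem_preimage {f : X → Y} {D : Set Y} {x : X} {κ : ℝ}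
    (h : MSQCAt f D x κ) (hf : DifferentiableAt ℝ f x) (hx : f x ∈ D) (w : X) :
    ∃ u : ℝ × Y → X, Tendsto u (𝓝[>] 0 ×ˢ 𝓝 (fderiv ℝ f x w)) (𝓝 w) ∧
      ∀ᶠ p in 𝓝[>] 0 ×ˢ 𝓝 (fderiv ℝ f x w), f x + p.1 • p.2 ∈ D → f (x + p.1 • u p) ∈ D := by
  set L := 𝓝[>] (0 : ℝ) ×ˢ 𝓝 (fderiv ℝ f x w)
  have ht : Tendsto (fun p : ℝ × Y => p.1) L (𝓝 0) := tendsto_fst.mono_right nhdsWithin_le_nhds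
  have hray : Tendsto (fun p : ℝ × Y => x + p.1 • w) L (𝓝 x) := by
    simpa using tendsto_const_nhds.add (ht.smul_const w)
  have hslope : Tendsto (fun p : ℝ × Y => p.1⁻¹ • (f (x + p.1 • w) - f x)) L
      (𝓝 (fderiv ℝ f x w)) :=
    (hf.tendsto_slope_fderiv w).comp (tendsto_fst.prodMk tendsto_const_nhds)
  have hnear : ∀ᶠ p in L, ∃ y : X, (f x + p.1 • p.2 ∈ D → f y ∈ D) ∧
      ‖y - (x + p.1 • w)‖ ≤ κ * ‖f (x + p.1 • w) - (f x + p.1 • p.2)‖ + p.1 ^ 2 := by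
    filter_upwards [eventually_pos_fst_nhdsGT_prod _,
      hray.eventually (h.eventually_exists_near_preimage hx)] with p hp hpre
    by_cases hD : f x + p.1 • p.2 ∈ D
    · obtain ⟨u', hu', hlt⟩ := hpre _ hD _ (pow_pos hp 2)
      exact ⟨u', fun _ => hu', hlt.le⟩
    · have hκ := h.1
      exact ⟨x + p.1 • w, fun h => absurd h hD, by simp only [sub_self, norm_zero]; positivity⟩
  obtain ⟨x', hx'⟩ := hnear.choice
  refine ⟨fun p => p.1⁻¹ • (x' p - x), ?_, ?_⟩
  · rw [tendsto_iff_norm_sub_tendsto_zero]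
    refine squeeze_zero' (.of_forall fun _ => norm_nonneg _) ?_
      (by simpa using ((hslope.sub tendsto_snd).norm.const_mul κ).add ht)
    filter_upwards [eventually_pos_fst_nhdsGT_prod _, hx'] with p hp hp'
    have hdir : p.1⁻¹ • (x' p - x) - w = p.1⁻¹ • (x' p - (x + p.1 • w)) := by
      rw [smul_sub, smul_sub, smul_add, inv_smul_smul₀ hp.ne', sub_add_eq_sub_sub]
    have hval : f (x + p.1 • w) - (f x + p.1 • p.2)
        = p.1 • (p.1⁻¹ • (f (x + p.1 • w) - f x) - p.2) := by
      rw [smul_sub, smul_inv_smul₀ hp.ne', sub_add_eq_sub_sub]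
    rw [hval, norm_smul, Real.norm_of_nonneg hp.le] at hp'
    calc ‖p.1⁻¹ • (x' p - x) - w‖ = p.1⁻¹ * ‖x' p - (x + p.1 • w)‖ := by
          rw [hdir, norm_smul, Real.norm_of_nonneg (inv_nonneg.2 hp.le)]
      _ ≤ p.1⁻¹ * (κ * (p.1 * ‖p.1⁻¹ • (f (x + p.1 • w) - f x) - p.2‖) + p.1 ^ 2) := by
          gcongr
          exact hp'.2
      _ = κ * ‖p.1⁻¹ • (f (x + p.1 • w) - f x) - p.2‖ + p.1 := by
          field_simp
  · filter_upwards [eventually_pos_fst_nhdsGT_prod _, hx'] with p hp hp' hD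
    rw [smul_inv_smul₀ hp.ne', add_sub_cancel]
    exact hp'.1 hD

theorem subderiv_comp_le_of_msqcAt {f : X → Y} {ϑ : Y → EReal} {x : X}
    (hf : DifferentiableAt ℝ f x) (hfin : ϑ (f x) ≠ ⊤) (hbot : ϑ (f x) ≠ ⊥) {ℓ : ℝ}
    (hlip : LipRelDom ϑ (f x) ℓ) {κ : ℝ} (hmsqc : MSQCAt f (edom ϑ) x κ) (w : X) :
    subderiv (fun u => ϑ (f u)) x w ≤ subderiv ϑ (f x) (fderiv ℝ f x w) := by
  set L := 𝓝[>] (0 : ℝ) ×ˢ 𝓝 (fderiv ℝ f x w)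
  obtain ⟨u, hu, hdom⟩ := hmsqc.exists_tendsto_mem_preimage hf hfin w
  have ht : Tendsto (fun p : ℝ × Y => p.1) L (𝓝 0) := tendsto_fst.mono_right nhdsWithin_le_nhds
  have hg : Tendsto (fun p : ℝ × Y => (p.1, u p)) L (𝓝[>] 0 ×ˢ 𝓝 w) := tendsto_fst.prodMk hu
  set slope : ℝ × Y → Y := fun p => p.1⁻¹ • (f (x + p.1 • u p) - f x)
  have hε : Tendsto (fun p => ℓ * ‖slope p - p.2‖) L (𝓝 0) := by
    simpa using (((hf.tendsto_slope_fderiv w).comp hg).sub tendsto_snd).norm.const_mul ℓ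
  refine liminf_le_liminf_of_le_add hg hε ?_
  obtain ⟨V, hV, hlipV⟩ := hlip
  have hfx : Tendsto (fun p : ℝ × Y => f (x + p.1 • u p)) L (𝓝 (f x)) :=
    hf.continuousAt.tendsto.comp (by simpa using tendsto_const_nhds.add (ht.smul hu))
  have hy : Tendsto (fun p : ℝ × Y => f x + p.1 • p.2) L (𝓝 (f x)) := by
    simpa using tendsto_const_nhds.add (ht.smul tendsto_snd)
  filter_upwards [eventually_pos_fst_nhdsGT_prod _, hdom, hfx.eventually_mem hV,
    hy.eventually_mem hV] with p hp hpdom hfV hyV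
  rw [show ℓ * ‖slope p - p.2‖ = p.1⁻¹ * (p.1 * (ℓ * ‖slope p - p.2‖)) by field_simp]
  refine EReal.coe_inv_mul_sub_le hp hfin hbot ?_
  by_cases hD : f x + p.1 • p.2 ∈ edom ϑ
  · have hdist : ‖f (x + p.1 • u p) - (f x + p.1 • p.2)‖ = p.1 * ‖slope p - p.2‖ := by
      rw [← norm_smul_of_nonneg hp.le, smul_sub, show p.1 • slope p = _ from
        smul_inv_smul₀ hp.ne' _, sub_add_eq_sub_sub]
    refine (hlipV _ hfV _ hyV (hpdom hD) hD).trans_eq ?_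
    rw [hdist, mul_left_comm]
  · rw [show ϑ (f x + p.1 • p.2) = ⊤ by simpa [edom] using hD, EReal.top_add_coe]
    exact le_top

end Subderivative

theorem stmt4_general {n m : ℕ} (f : Euc n → Euc m) (ϑ : Euc m → EReal) (xb : Euc n)
    (hf : DifferentiableAt ℝ f xb) (hbot : ∀ y, ϑ y ≠ ⊥) (hfin : ϑ (f xb) ≠ ⊤)
    (ℓ : ℝ) (hlip : LipRelDom ϑ (f xb) ℓ)
    (κ : ℝ) (hmsqc : MSQCAt f (edom ϑ) xb κ) :
    ∀ w : Euc n,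
      subderiv (fun x => ϑ (f x)) xb w = subderiv ϑ (f xb) (fderiv ℝ f xb w) := fun w =>
  le_antisymm (subderiv_comp_le_of_msqcAt hf hfin (hbot _) hlip hmsqc w)
    (subderiv_le_subderiv_comp hf ϑ w)

/-- subderivative chain rule as an equality under metric subregularity. -/
theorem stmt4 {n m : ℕ} (f : Euc n → Euc m) (ϑ : Euc m → EReal) (xb : Euc n)
    (hf : DifferentiableAt ℝ f xb) (hbot : ∀ y, ϑ y ≠ ⊥) (hfin : ϑ (f xb) ≠ ⊤)
    (ℓ : ℝ) (hl : 0 ≤ ℓ) (hlip : LipRelDom ϑ (f xb) ℓ)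
    (κ : ℝ) (hmsqc : MSQCAt f (edom ϑ) xb κ) :
    ∀ w : Euc n,
      subderiv (fun x => ϑ (f x)) xb w = subderiv ϑ (f xb) (fderiv ℝ f xb w) :=
  stmt4_general f ϑ xb hf hbot hfin ℓ hlip κ hmsqc
end
end

section
/- Let φ: ℝⁿ → ℝ ∪ {∞}, x̄ ∈ dom φ, and v̄ ∈ ∂_p φ(x̄) be a proximal subgradient. Assume that for every w ∈ ℝⁿ with dφ(x̄)(w) = ⟨v̄, w⟩, the second-order tangent set T²_{epi φ}((x̄, φ(x̄)), (w, dφ(x̄)(w))) is nonempty. Then dom d²φ(x̄, v̄) = {w ∈ ℝⁿ : dφ(x̄)(w) = ⟨v̄, w⟩}. -/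
open Filter Topology Metric Set

noncomputable section

/-!
A proximal subgradient gives the quadratic minorant `φ (x + t u) ≥ φ x + t ⟪v, u⟫ - (r/2) t² ‖u‖²`,
hence `⟪v, w⟫ ≤ dφ(x)(w)` for all `w`. If this inequality is strict, the second-order difference
quotients blow up like `1/t`, so `d²φ(x, v)(w) = ∞`. Conversely, a second-order tangent vector
`(u₁, u₂) = lim (u₁ₖ, u₂ₖ)` to the epigraph along `(w, ⟪v, w⟫)` produces points
`x + tₖ (w + (tₖ/2) u₁ₖ)` at which the second-order difference quotient is at most
`u₂ₖ - ⟪v, u₁ₖ⟫ → u₂ - ⟪v, u₁⟫`, so that `d²φ(x, v)(w) < ∞`.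
-/

namespace EReal

lemma coe_le_coe_mul_sub_iff {a s d : ℝ} (ha : 0 < a) (z : EReal) :
    (s : EReal) ≤ (a : EReal) * (z - d) ↔ ((d + s / a : ℝ) : EReal) ≤ z := by
  induction z with
  | bot => simp [mul_bot_of_pos (EReal.coe_pos.mpr ha)]
  | top => simp [mul_top_of_pos (EReal.coe_pos.mpr ha)]
  | coe z =>
    rw [← coe_sub, ← coe_mul, EReal.coe_le_coe_iff, EReal.coe_le_coe_iff, ← le_sub_iff_add_le',
      div_le_iff₀ ha, mul_comm]

lemma coe_mul_sub_le_coe_iff {a s d : ℝ} (ha : 0 < a) (z : EReal) :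
    (a : EReal) * (z - d) ≤ s ↔ z ≤ ((d + s / a : ℝ) : EReal) := by
  induction z with
  | bot => simp [mul_bot_of_pos (EReal.coe_pos.mpr ha)]
  | top => simpa [mul_top_of_pos (EReal.coe_pos.mpr ha)] using EReal.coe_ne_top (d + s / a)
  | coe z =>
    rw [← coe_sub, ← coe_mul, EReal.coe_le_coe_iff, EReal.coe_le_coe_iff, ← sub_le_iff_le_add',
      le_div_iff₀ ha, mul_comm]

end EReal

lemma nhdsGT_zero_prod_le_nhds {X : Type*} [TopologicalSpace X] (w : X) : 𝓝[>] (0 : ℝ) ×ˢ 𝓝 w ≤ 𝓝 (0, w) :=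
  (nhds_prod_eq (x := (0 : ℝ)) (y := w)).symm ▸ prod_mono nhdsWithin_le_nhds le_rfl

lemma eventually_pos_nhdsGT_zero_prod {X : Type*} [TopologicalSpace X] (w : X) : ∀ᶠ p : ℝ × X in 𝓝[>] (0 : ℝ) ×ˢ 𝓝 w, 0 < p.1 :=
  Eventually.prod_inl self_mem_nhdsWithin _

section SecondSubderiv

open scoped InnerProductSpace

variable {X : Type*} [NormedAddCommGroup X] [InnerProductSpace ℝ X]
  {φ : X → EReal} {x v w : X} {c : ℝ}

lemma quadDiff_of_eq_coe (hx : φ x = c) (t : ℝ) (u : X) :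
    quadDiff φ x v t u =
      ((2 / t ^ 2 : ℝ) : EReal) * (φ (x + t • u) - ((c + t * ⟪v, u⟫_ℝ : ℝ) : EReal)) := by
  rw [quadDiff, hx]
  congr 1
  induction φ (x + t • u) with
  | bot => simp
  | top => simp only [EReal.top_sub_coe]
  | coe z => norm_cast; ring

lemma inner_le_subderiv_of_mem_proxSubdiff (hx : φ x = c) (hv : v ∈ proxSubdiff φ x) (w : X) :
    ((⟪v, w⟫_ℝ : ℝ) : EReal) ≤ subderiv φ x w := by
  obtain ⟨r, -, γ, hγ, hprox⟩ := hv
  have hF := nhdsGT_zero_prod_le_nhds w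
  have hminorant : Tendsto (fun p : ℝ × X => ⟪v, p.2⟫_ℝ - r / 2 * (p.1 * ‖p.2‖ ^ 2))
      (𝓝[>] 0 ×ˢ 𝓝 w) (𝓝 ⟪v, w⟫_ℝ) := by
    have hcont : Continuous fun p : ℝ × X => ⟪v, p.2⟫_ℝ - r / 2 * (p.1 * ‖p.2‖ ^ 2) := by
      fun_prop
    simpa using (hcont.tendsto (0, w)).mono_left hF
  have hsmall : ∀ᶠ p : ℝ × X in 𝓝[>] 0 ×ˢ 𝓝 w, p.1 * ‖p.2‖ < γ := by
    have hcont : Continuous fun p : ℝ × X => p.1 * ‖p.2‖ := by fun_prop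
    exact ((hcont.tendsto (0, w)).mono_left hF).eventually (gt_mem_nhds (by simpa using hγ))
  have hev : ∀ᶠ p : ℝ × X in 𝓝[>] 0 ×ˢ 𝓝 w,
      ((⟪v, p.2⟫_ℝ - r / 2 * (p.1 * ‖p.2‖ ^ 2) : ℝ) : EReal) ≤
        ((p.1⁻¹ : ℝ) : EReal) * (φ (x + p.1 • p.2) - φ x) := by
    filter_upwards [hsmall, eventually_pos_nhdsGT_zero_prod w] with ⟨t, u⟩ hs ht
    have hy : x + t • u ∈ ball x γ := by
      simpa [dist_eq_norm, norm_smul, abs_of_pos ht] using hs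
    rw [hx, EReal.coe_le_coe_mul_sub_iff (inv_pos.2 ht)]
    refine le_of_eq_of_le ?_ (hprox _ hy)
    rw [hx, add_sub_cancel_left, real_inner_smul_right, norm_smul, Real.norm_eq_abs,
      abs_of_pos ht, ← EReal.coe_add]
    congr 1
    field_simp
  calc ((⟪v, w⟫_ℝ : ℝ) : EReal) = liminf _ (𝓝[>] 0 ×ˢ 𝓝 w) :=
        (EReal.tendsto_coe.2 hminorant).liminf_eq.symm
    _ ≤ subderiv φ x w := liminf_le_liminf hev

lemma secondSubderiv_eq_top_of_inner_lt_subderiv (hx : φ x = c)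
    (h : ((⟪v, w⟫_ℝ : ℝ) : EReal) < subderiv φ x w) : secondSubderiv φ x v w = ⊤ := by
  obtain ⟨b, hwb, hb⟩ := EReal.exists_between_coe_real h
  set δ := b - ⟪v, w⟫_ℝ
  have hδ : 0 < δ := sub_pos.2 (EReal.coe_lt_coe_iff.1 hwb)
  have hquot : ∀ᶠ p : ℝ × X in 𝓝[>] 0 ×ˢ 𝓝 w,
      (b : EReal) ≤ ((p.1⁻¹ : ℝ) : EReal) * (φ (x + p.1 • p.2) - φ x) :=
    (eventually_lt_of_lt_liminf hb).mono fun _ => le_of_lt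
  have hinner : ∀ᶠ p : ℝ × X in 𝓝[>] 0 ×ˢ 𝓝 w, ⟪v, p.2⟫_ℝ < ⟪v, w⟫_ℝ + δ / 2 := by
    have hcont : Continuous fun p : ℝ × X => ⟪v, p.2⟫_ℝ := by fun_prop
    exact ((hcont.tendsto (0, w)).mono_left (nhdsGT_zero_prod_le_nhds w)).eventually
      (gt_mem_nhds (by linarith))
  have hev : ∀ᶠ p : ℝ × X in 𝓝[>] 0 ×ˢ 𝓝 w,
      ((δ / p.1 : ℝ) : EReal) ≤ quadDiff φ x v p.1 p.2 := by
    filter_upwards [hquot, hinner, eventually_pos_nhdsGT_zero_prod w] with ⟨t, u⟩ hq hi ht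
    rw [hx, EReal.coe_le_coe_mul_sub_iff (inv_pos.2 ht)] at hq
    rw [quadDiff_of_eq_coe hx, EReal.coe_le_coe_mul_sub_iff (by positivity)]
    refine le_trans (EReal.coe_le_coe_iff.2 ?_) hq
    field_simp
    nlinarith
  have hblowup : Tendsto (fun p : ℝ × X => ((δ / p.1 : ℝ) : EReal)) (𝓝[>] 0 ×ˢ 𝓝 w) (𝓝 ⊤) :=
    EReal.tendsto_coe_atTop.comp
      ((tendsto_inv_nhdsGT_zero.const_mul_atTop hδ).comp tendsto_fst)
  exact (tendsto_nhds_top_mono hblowup hev).liminf_eq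

lemma secondSubderiv_le_of_mem_secondTangent_epiSet (hx : φ x = c) {u : X × ℝ}
    (hu : u ∈ secondTangent (epiSet φ) (x, c) (w, ⟪v, w⟫_ℝ)) :
    secondSubderiv φ x v w ≤ ((u.2 - ⟪v, u.1⟫_ℝ : ℝ) : EReal) := by
  obtain ⟨t, uk, ht, ht0, huk, hmem⟩ := hu
  let wk : ℕ → X := fun k => w + (t k / 2) • (uk k).1
  have hseq : Tendsto (fun k => (t k, wk k)) atTop (𝓝[>] 0 ×ˢ 𝓝 w) := by
    refine (tendsto_nhdsWithin_iff.2 ⟨ht0, .of_forall ht⟩).prodMk ?_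
    simpa using tendsto_const_nhds.add
      ((ht0.div_const 2).smul ((continuous_fst.tendsto u).comp huk))
  have hbound : ∀ k, quadDiff φ x v (t k) (wk k) ≤
      (((uk k).2 - ⟪v, (uk k).1⟫_ℝ : ℝ) : EReal) := by
    intro k
    have hk := hmem k
    simp only [epiSet, mem_ofPred_eq, Prod.fst_add, Prod.snd_add, Prod.smul_fst,
      Prod.smul_snd, smul_eq_mul] at hk
    rw [quadDiff_of_eq_coe hx, EReal.coe_mul_sub_le_coe_iff (by positivity [ht k])]
    convert hk using 2
    · simp only [wk, smul_add, smul_smul, add_assoc]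
      ring_nf
    · rw [inner_add_right, real_inner_smul_right]
      field_simp
      ring
  have hlim : Tendsto (fun k => (((uk k).2 - ⟪v, (uk k).1⟫_ℝ : ℝ) : EReal)) atTop
      (𝓝 ((u.2 - ⟪v, u.1⟫_ℝ : ℝ) : EReal)) := by
    have hcont : Continuous fun q : X × ℝ => q.2 - ⟪v, q.1⟫_ℝ := by fun_prop
    exact EReal.tendsto_coe.2 ((hcont.tendsto u).comp huk)
  calc secondSubderiv φ x v w ≤ liminf (fun k => quadDiff φ x v (t k) (wk k)) atTop :=
        hseq.liminf_le_liminf_comp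
    _ ≤ _ := liminf_le_liminf (.of_forall hbound)
    _ = _ := hlim.liminf_eq

end SecondSubderiv

theorem stmt7_general {n : ℕ} (φ : Euc n → EReal) (xb vb : Euc n) (c : ℝ)
    (hxb : φ xb = (c : EReal))
    (hprox : vb ∈ proxSubdiff φ xb)
    (hT : ∀ w : Euc n, subderiv φ xb w = ((inner ℝ vb w : ℝ) : EReal) →
      (secondTangent {p : Euc n × ℝ | φ p.1 ≤ (p.2 : EReal)} (xb, c)
        (w, (inner ℝ vb w : ℝ))).Nonempty) :
    {w : Euc n | secondSubderiv φ xb vb w ≠ ⊤} = critCone φ xb vb := by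
  ext w
  refine ⟨fun hfin => ?_, fun hcrit => ?_⟩
  · refine le_antisymm ?_ (inner_le_subderiv_of_mem_proxSubdiff hxb hprox w)
    exact not_lt.1 fun hlt => hfin (secondSubderiv_eq_top_of_inner_lt_subderiv hxb hlt)
  · obtain ⟨u, hu⟩ := hT w hcrit
    exact ne_top_of_le_ne_top (EReal.coe_ne_top _)
      (secondSubderiv_le_of_mem_secondTangent_epiSet hxb hu)

/-- domain of the second subderivative equals the critical cone under
nonemptiness of second-order tangent sets to the epigraph. -/
theorem stmt7 {n : ℕ} (φ : Euc n → EReal) (xb vb : Euc n) (c : ℝ)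
    (hbot : ∀ x, φ x ≠ ⊥) (hxb : φ xb = (c : EReal))
    (hprox : vb ∈ proxSubdiff φ xb)
    (hT : ∀ w : Euc n, subderiv φ xb w = ((inner ℝ vb w : ℝ) : EReal) →
      (secondTangent {p : Euc n × ℝ | φ p.1 ≤ (p.2 : EReal)} (xb, c)
        (w, (inner ℝ vb w : ℝ))).Nonempty) :
    {w : Euc n | secondSubderiv φ xb vb w ≠ ⊤} = critCone φ xb vb :=
  stmt7_general φ xb vb c hxb hprox hT
end
end

section
/- Let φ = ϑ∘f be fully subamenable at x̄: f: ℝⁿ → ℝᵐ is twice differentiable at x̄, ϑ: ℝᵐ → ℝ ∪ {∞} is convex piecewise linear-quadratic with f(x̄) ∈ dom ϑ, and the mapping x ↦ f(x) − dom ϑ is metrically subregular at (x̄,0) with constant κ. Then for every tangent vector w ∈ T_Ω(x̄), where Ω = {x : f(x) ∈ dom ϑ}, the second-order tangent set T²_Ω(x̄, w) is nonempty. -/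
open Filter Topology Metric Set

noncomputable section

/-! Differentiating along a tangent sequence shows that `d = f'(x̄) w` is tangent to `dom ϑ` at
`f x̄`, hence (pigeonhole) to one of the finitely many polyhedral pieces, and for a polyhedron
tangent directions are feasible: `f x̄ + s d` stays in the piece for small `s > 0`. Since `f'` is
differentiable at `x̄`, `f (x̄ + s w)` is within `O(s²)` of `f x̄ + s d`, so
`dist (f (x̄ + s w), dom ϑ) = O(s²)`, and metric subregularity transfers this to
`dist (x̄ + s w, Ω) = O(s²)`. Near points `z_s ∈ Ω` then give bounded second-order directions
`2 (z_s - x̄ - s w) / s²`, and any cluster point of them lies in `T²_Ω(x̄, w)`. -/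

open Asymptotics

section Tangent

variable {X Y : Type*} [NormedAddCommGroup X] [NormedSpace ℝ X]
  [NormedAddCommGroup Y] [NormedSpace ℝ Y]

theorem tangentConeB_mono {s t : Set X} {x : X} (hst : s ⊆ t) :
    tangentConeB s x ⊆ tangentConeB t x :=
  fun _ ⟨τ, v, hτ, hτ0, hv, hmem⟩ => ⟨τ, v, hτ, hτ0, hv, fun k => hst (hmem k)⟩

theorem mem_closure_of_mem_tangentConeB {s : Set X} {x w : X} (hw : w ∈ tangentConeB s x) :
    x ∈ closure s := by
  obtain ⟨τ, v, -, hτ0, hv, hmem⟩ := hw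
  have hlim : Tendsto (fun k => x + τ k • v k) atTop (𝓝 (x + (0 : ℝ) • w)) :=
    tendsto_const_nhds.add (hτ0.smul hv)
  rw [zero_smul, add_zero] at hlim
  exact mem_closure_of_tendsto hlim (Eventually.of_forall hmem)

theorem tangentConeB_iUnion_subset {ι : Type*} [Finite ι] (s : ι → Set X) (x : X) :
    tangentConeB (⋃ i, s i) x ⊆ ⋃ i, tangentConeB (s i) x := by
  rintro w ⟨τ, v, hτ, hτ0, hv, hmem⟩
  obtain ⟨i, hi⟩ : ∃ i, ∃ᶠ k in atTop, x + τ k • v k ∈ s i := by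
    by_contra! h
    obtain ⟨k, hk⟩ := (eventually_all.2 h).exists
    obtain ⟨i, hi⟩ := mem_iUnion.1 (hmem k)
    exact hk i hi
  obtain ⟨φ, hφ, hφmem⟩ := extraction_of_frequently_atTop hi
  exact mem_iUnion.2 ⟨i, τ ∘ φ, v ∘ φ, fun k => hτ _, hτ0.comp hφ.tendsto_atTop,
    hv.comp hφ.tendsto_atTop, hφmem⟩

theorem DifferentiableAt.fderiv_mem_tangentConeB_of_mem_preimage {f : X → Y} {D : Set Y}
    {x w : X} (hf : DifferentiableAt ℝ f x) (hw : w ∈ tangentConeB (f ⁻¹' D) x) :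
    fderiv ℝ f x w ∈ tangentConeB D (f x) := by
  obtain ⟨τ, v, hτ, hτ0, hv, hmem⟩ := hw
  refine ⟨τ, fun k => (τ k)⁻¹ • (f (x + τ k • v k) - f x), hτ, hτ0, ?_, fun k => ?_⟩
  · refine hf.hasFDerivAt.hasFDerivWithinAt.lim (s := univ) ?_ (Eventually.of_forall
      fun _ => trivial) ?_
    · simpa using hτ0.smul hv
    · refine hv.congr fun k => ?_
      rw [smul_smul, inv_mul_cancel₀ (hτ k).ne', one_smul]
  · simpa [smul_inv_smul₀ (hτ k).ne'] using hmem k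

end Tangent

section Polyhedral

variable {X : Type*} [NormedAddCommGroup X] [InnerProductSpace ℝ X]

theorem eventually_add_smul_mem_halfspace_of_mem_tangentConeB {c y d : X} {b : ℝ}
    (hd : d ∈ tangentConeB {x | inner ℝ c x ≤ b} y) :
    ∀ᶠ s in 𝓝[>] (0 : ℝ), inner ℝ c (y + s • d) ≤ b := by
  have hy : inner ℝ c y ≤ b := by
    have hclosed : IsClosed {x : X | inner ℝ c x ≤ b} :=
      isClosed_le (continuous_const.inner continuous_id) continuous_const
    simpa [hclosed.closure_eq] using mem_closure_of_mem_tangentConeB hd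
  rcases hy.lt_or_eq with hlt | heq
  · have hcont : Tendsto (fun s : ℝ => inner ℝ c (y + s • d)) (𝓝[>] 0) (𝓝 (inner ℝ c y)) := by
      have hc : Continuous fun s : ℝ => inner ℝ c (y + s • d) := by fun_prop
      simpa using (hc.tendsto 0).mono_left nhdsWithin_le_nhds
    exact (hcont.eventually_lt_const hlt).mono fun _ => le_of_lt
  · obtain ⟨τ, v, hτ, -, hv, hmem⟩ := hd
    have hcd : inner ℝ c d ≤ 0 := by
      refine le_of_tendsto' (tendsto_const_nhds.inner hv) fun k => ?_
      have hk := hmem k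
      simp only [mem_ofPred_eq, inner_add_right, real_inner_smul_right, heq] at hk
      nlinarith [hτ k]
    filter_upwards [self_mem_nhdsWithin] with s (hs : 0 < s)
    rw [inner_add_right, real_inner_smul_right, heq]
    nlinarith

theorem IsPolyhedral.eventually_add_smul_mem {P : Set X} (hP : IsPolyhedral P) {y d : X}
    (hd : d ∈ tangentConeB P y) : ∀ᶠ s in 𝓝[>] (0 : ℝ), y + s • d ∈ P := by
  obtain ⟨k, c, b, rfl⟩ := hP
  exact eventually_all.2 fun i => eventually_add_smul_mem_halfspace_of_mem_tangentConeB
    (tangentConeB_mono (fun x (hx : ∀ j, inner ℝ (c j) x ≤ b j) => hx i) hd)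

end Polyhedral

section Asymptotics

variable {X Y : Type*} [NormedAddCommGroup X] [NormedSpace ℝ X] [NormedAddCommGroup Y]

theorem tendsto_smul_nhdsGT_zero (w : X) :
    Tendsto (fun s : ℝ => s • w) (𝓝[>] 0) (𝓝 0) := by
  have hc : Continuous fun s : ℝ => s • w := by fun_prop
  simpa using (hc.tendsto 0).mono_left nhdsWithin_le_nhds

theorem TwiceDiffAt.isBigO_sub_sub_fderiv [NormedSpace ℝ Y] {f : X → Y} {x : X}
    (hf : TwiceDiffAt f x) :
    (fun h => f (x + h) - f x - fderiv ℝ f x h) =O[𝓝 0] fun h => ‖h‖ ^ 2 := by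
  obtain ⟨c, hc0, hc⟩ := hf.2.isBigO_sub.exists_pos
  obtain ⟨r, hr, hball⟩ := Metric.eventually_nhds_iff_ball.1 (hf.1.and hc.bound)
  refine IsBigO.of_bound c ?_
  filter_upwards [ball_mem_nhds (0 : X) hr] with h hh
  have hsub : closedBall x ‖h‖ ⊆ ball x r := closedBall_subset_ball (by simpa using hh)
  have hderiv : ∀ z ∈ closedBall x ‖h‖, ‖fderiv ℝ f z - fderiv ℝ f x‖ ≤ c * ‖h‖ := by
    intro z hz
    calc ‖fderiv ℝ f z - fderiv ℝ f x‖ ≤ c * ‖z - x‖ := (hball z (hsub hz)).2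
      _ ≤ c * ‖h‖ := mul_le_mul_of_nonneg_left (mem_closedBall_iff_norm.1 hz) hc0.le
  have hmvt := (convex_closedBall x ‖h‖).norm_image_sub_le_of_norm_fderiv_le'
    (fun z hz => (hball z (hsub hz)).1) hderiv (mem_closedBall_self (norm_nonneg h))
    (y := x + h) (by simp)
  simpa [sq, mul_assoc] using hmvt

theorem infDist_image_add_smul_isBigO [NormedSpace ℝ Y] {f : X → Y} {D : Set Y} {x w : X}
    (hf : TwiceDiffAt f x) (hray : ∀ᶠ s in 𝓝[>] (0 : ℝ), f x + s • fderiv ℝ f x w ∈ D) :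
    (fun s : ℝ => infDist (f (x + s • w)) D) =O[𝓝[>] 0] fun s => s ^ 2 := by
  have htaylor := hf.isBigO_sub_sub_fderiv.comp_tendsto (tendsto_smul_nhdsGT_zero w)
  refine IsBigO.trans ?_ (htaylor.trans ?_)
  · refine IsBigO.of_bound' (hray.mono fun s hs => ?_)
    rw [Real.norm_of_nonneg infDist_nonneg, Function.comp_apply, map_smul, sub_sub,
      ← dist_eq_norm]
    exact infDist_le_dist_of_mem hs
  · refine IsBigO.of_bound (‖w‖ ^ 2) (Eventually.of_forall fun s => ?_)
    simp [norm_smul, mul_pow, mul_comm]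

theorem MSQCAt.infDist_add_smul_isBigO {f : X → Y} {D : Set Y} {x : X} {κ : ℝ}
    (h : MSQCAt f D x κ) {w : X} {g : ℝ → ℝ}
    (hg : (fun s : ℝ => infDist (f (x + s • w)) D) =O[𝓝[>] 0] g) :
    (fun s : ℝ => infDist (x + s • w) (f ⁻¹' D)) =O[𝓝[>] 0] g := by
  have hray : Tendsto (fun s : ℝ => x + s • w) (𝓝[>] 0) (𝓝 x) := by
    simpa using tendsto_const_nhds.add (tendsto_smul_nhdsGT_zero w)
  refine IsBigO.trans (IsBigO.of_bound κ ((hray.eventually h.2).mono fun s hs => ?_)) hg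
  simpa only [Real.norm_of_nonneg infDist_nonneg] using hs

end Asymptotics

section SecondOrder

variable {X : Type*} [NormedAddCommGroup X] [NormedSpace ℝ X] [ProperSpace X]

theorem secondTangent_nonempty_of_eventually_bounded {Ω : Set X} {x w : X} {R : ℝ}
    (h : ∀ᶠ s in 𝓝[>] (0 : ℝ), ∃ u ∈ closedBall (0 : X) R, x + s • w + (s ^ 2 / 2) • u ∈ Ω) :
    (secondTangent Ω x w).Nonempty := by
  obtain ⟨t, ht⟩ := exists_seq_tendsto (𝓝[>] (0 : ℝ))
  obtain ⟨φ, hφ, hgood⟩ :=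
    extraction_of_eventually_atTop (ht.eventually (h.and self_mem_nhdsWithin))
  choose u hu hmem using fun k => (hgood k).1
  obtain ⟨v, -, ψ, hψ, hv⟩ := tendsto_subseq_of_bounded isBounded_closedBall hu
  exact ⟨v, t ∘ φ ∘ ψ, u ∘ ψ, fun k => (hgood (ψ k)).2,
    (tendsto_nhds_of_tendsto_nhdsWithin ht).comp (hφ.tendsto_atTop.comp hψ.tendsto_atTop),
    hv, fun k => hmem (ψ k)⟩

theorem secondTangent_nonempty_of_infDist_isBigO {Ω : Set X} {x w : X} (hΩ : Ω.Nonempty)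
    (h : (fun s : ℝ => infDist (x + s • w) Ω) =O[𝓝[>] 0] fun s => s ^ 2) :
    (secondTangent Ω x w).Nonempty := by
  obtain ⟨K, hK⟩ := h.bound
  refine secondTangent_nonempty_of_eventually_bounded (R := 2 * (K + 1)) ?_
  filter_upwards [hK, self_mem_nhdsWithin] with s hs (hs0 : 0 < s)
  have hs2 : 0 < s ^ 2 := by positivity
  rw [Real.norm_of_nonneg infDist_nonneg, Real.norm_of_nonneg hs2.le] at hs
  obtain ⟨z, hz, hdist⟩ := (infDist_lt_iff hΩ).1 (show infDist (x + s • w) Ω < (K + 1) * s ^ 2 by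
    linarith)
  refine ⟨(2 / s ^ 2) • (z - x - s • w), ?_, ?_⟩
  · have hnorm : ‖z - x - s • w‖ = dist (x + s • w) z := by
      rw [dist_comm, dist_eq_norm, sub_sub]
    rw [mem_closedBall_zero_iff, norm_smul, Real.norm_of_nonneg (by positivity), hnorm,
      div_mul_eq_mul_div, div_le_iff₀ hs2]
    linarith
  · have hcancel : s ^ 2 / 2 * (2 / s ^ 2) = 1 := by field_simp
    rw [smul_smul, hcancel, one_smul]
    convert hz using 1
    abel

theorem stmt8_general {n m : ℕ} (f : Euc n → Euc m) (ϑ : Euc m → EReal) (xb : Euc n)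
    (hf : TwiceDiffAt f xb) (hplq : IsPLQ ϑ) (hdom : ϑ (f xb) ≠ ⊤)
    (κ : ℝ) (hmsqc : MSQCAt f (edom ϑ) xb κ) :
    ∀ w ∈ tangentConeB (f ⁻¹' edom ϑ) xb,
      (secondTangent (f ⁻¹' edom ϑ) xb w).Nonempty := by
  intro w hw
  obtain ⟨R⟩ := hplq
  have hd : fderiv ℝ f xb w ∈ tangentConeB (⋃ i, R.piece i) (f xb) :=
    R.dom_eq ▸ hf.1.self_of_nhds.fderiv_mem_tangentConeB_of_mem_preimage hw
  obtain ⟨i, hi⟩ := mem_iUnion.1 (tangentConeB_iUnion_subset _ _ hd)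
  have hray : ∀ᶠ s in 𝓝[>] (0 : ℝ), f xb + s • fderiv ℝ f xb w ∈ edom ϑ :=
    ((R.poly i).eventually_add_smul_mem hi).mono fun s hs => R.dom_eq ▸ mem_iUnion_of_mem i hs
  exact secondTangent_nonempty_of_infDist_isBigO ⟨xb, hdom⟩
    (hmsqc.infDist_add_smul_isBigO (infDist_image_add_smul_isBigO hf hray))

/-- nonemptiness of second-order tangent sets to the preimage set for fully
subamenable compositions. -/
theorem stmt8 {n m : ℕ} (f : Euc n → Euc m) (ϑ : Euc m → EReal) (xb : Euc n)
    (hf : TwiceDiffAt f xb) (hbot : ∀ y, ϑ y ≠ ⊥) (hplq : IsPLQ ϑ)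
    (hconv : ERealConvexOn ϑ) (hdom : ϑ (f xb) ≠ ⊤)
    (κ : ℝ) (hmsqc : MSQCAt f (edom ϑ) xb κ) :
    ∀ w ∈ tangentConeB (f ⁻¹' edom ϑ) xb,
      (secondTangent (f ⁻¹' edom ϑ) xb w).Nonempty :=
  stmt8_general f ϑ xb hf hplq hdom κ hmsqc
end SecondOrder
end
end

section
/- Let φ = ϑ∘f be fully subamenable at x̄ (f twice differentiable at x̄, ϑ convex piecewise linear-quadratic, and x ↦ f(x) − dom ϑ metrically subregular at (x̄,0)). If w ∈ T_Ω(x̄) with Ω = {x : f(x) ∈ dom ϑ} and z ∈ ℝⁿ satisfies ∇f(x̄)z + ∇²f(x̄)(w,w) ∈ T²_{dom ϑ}(f(x̄), ∇f(x̄)w), then z ∈ T²_Ω(x̄, w); moreover there exist ε > 0 and an arc ξ: [0,ε] → Ω with ξ(0) = x̄, ξ'₊(0) = w, and ξ''₊(0) = z. -/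
open Filter Topology Metric Set

noncomputable section

/-!
By the second-order Taylor expansion, `f` maps the parabola `x̄ + t w + (t²/2) z` to within
`o(t²)` of the parabola `f x̄ + t ∇f(x̄) w + (t²/2) (∇f(x̄) z + ∇²f(x̄)(w, w))`. Since `dom ϑ` is a
finite union of polyhedra, a second-order tangent vector to it is realised exactly: that image
parabola lies in `dom ϑ` for all small `t > 0` (each linear constraint along it is a quadratic in
`t` whose coefficients are forced to be lexicographically nonpositive). Metric subregularity then
puts `x̄ + t w + (t²/2) z` within `o(t²)` of `Ω`, and choosing nearby points of `Ω` gives the arc.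
-/

open Asymptotics

section Scalar

variable {t g : ℕ → ℝ} {α β γ : ℝ}

theorem eventually_add_mul_nonpos_of_seq (ht0 : ∀ k, 0 < t k) (ht : Tendsto t atTop (𝓝 0))
    (hg : Tendsto g atTop (𝓝 γ)) (h : ∀ k, β + t k * g k ≤ 0) :
    ∀ᶠ s in 𝓝[>] (0:ℝ), β + s * γ ≤ 0 := by
  have hβ : β ≤ 0 := le_of_tendsto' (by simpa using tendsto_const_nhds.add (ht.mul hg)) h
  rcases hβ.lt_or_eq with hβ | rfl
  · have hlim : Tendsto (fun s : ℝ => β + s * γ) (𝓝[>] 0) (𝓝 β) :=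
      ((by fun_prop : Continuous fun s : ℝ => β + s * γ).tendsto' 0 β (by simp)).mono_left
        nhdsWithin_le_nhds
    exact (hlim.eventually_lt_const hβ).mono fun _ => le_of_lt
  · have hγ : γ ≤ 0 := le_of_tendsto' hg fun k =>
      nonpos_of_mul_nonpos_right (by simpa using h k) (ht0 k)
    filter_upwards [self_mem_nhdsWithin] with s (hs : 0 < s)
    simpa using mul_nonpos_of_nonneg_of_nonpos hs.le hγ

theorem eventually_add_mul_add_sq_nonpos_of_seq (ht0 : ∀ k, 0 < t k)
    (ht : Tendsto t atTop (𝓝 0)) (hg : Tendsto g atTop (𝓝 γ))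
    (h : ∀ k, α + t k * β + t k ^ 2 / 2 * g k ≤ 0) :
    ∀ᶠ s in 𝓝[>] (0:ℝ), α + s * β + s ^ 2 / 2 * γ ≤ 0 := by
  have hα : α ≤ 0 := le_of_tendsto' (by simpa using
    (tendsto_const_nhds.add (ht.mul tendsto_const_nhds)).add (((ht.pow 2).div_const 2).mul hg)) h
  rcases hα.lt_or_eq with hα | rfl
  · have hlim : Tendsto (fun s : ℝ => α + s * β + s ^ 2 / 2 * γ) (𝓝[>] 0) (𝓝 α) :=
      ((by fun_prop : Continuous fun s : ℝ => α + s * β + s ^ 2 / 2 * γ).tendsto' 0 α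
        (by simp)).mono_left nhdsWithin_le_nhds
    exact (hlim.eventually_lt_const hα).mono fun _ => le_of_lt
  · have hlin := eventually_add_mul_nonpos_of_seq ht0 ht (hg.div_const 2) fun k =>
      nonpos_of_mul_nonpos_right (by linear_combination h k) (ht0 k)
    filter_upwards [hlin, self_mem_nhdsWithin] with s hs (hs0 : 0 < s)
    linarith [mul_nonpos_of_nonneg_of_nonpos hs0.le hs]

end Scalar

section Polyhedral

variable {X : Type*} [NormedAddCommGroup X] [InnerProductSpace ℝ X]

theorem IsPolyhedral.eventually_parabola_mem {C : Set X} (hC : IsPolyhedral C) {y q u : X}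
    {t : ℕ → ℝ} {uk : ℕ → X} (ht0 : ∀ k, 0 < t k) (ht : Tendsto t atTop (𝓝 0))
    (hu : Tendsto uk atTop (𝓝 u)) (hmem : ∀ k, y + t k • q + (t k ^ 2 / 2) • uk k ∈ C) :
    ∀ᶠ s in 𝓝[>] (0:ℝ), y + s • q + (s ^ 2 / 2) • u ∈ C := by
  obtain ⟨N, c, b, rfl⟩ := hC
  have expand : ∀ j (s : ℝ) (v : X), inner ℝ (c j) (y + s • q + (s ^ 2 / 2) • v) - b j =
      (inner ℝ (c j) y - b j) + s * inner ℝ (c j) q + s ^ 2 / 2 * inner ℝ (c j) v := by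
    intro j s v
    simp only [inner_add_right, real_inner_smul_right]
    ring
  simp only [mem_ofPred_eq, eventually_all]
  intro j
  have hj := eventually_add_mul_add_sq_nonpos_of_seq ht0 ht (tendsto_const_nhds.inner hu)
    fun k => (expand j (t k) (uk k)).symm.trans_le (sub_nonpos.2 (hmem k j))
  exact hj.mono fun s hs => sub_nonpos.1 ((expand j s u).trans_le hs)

theorem eventually_parabola_mem_of_mem_secondTangent {ι : Type*} [Finite ι] {P : ι → Set X}
    (hP : ∀ i, IsPolyhedral (P i)) {y q u : X} (hu : u ∈ secondTangent (⋃ i, P i) y q) :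
    ∀ᶠ s in 𝓝[>] (0:ℝ), y + s • q + (s ^ 2 / 2) • u ∈ ⋃ i, P i := by
  obtain ⟨t, uk, ht0, ht, hu, hmem⟩ := hu
  obtain ⟨i, hi⟩ : ∃ i, ∃ᶠ k in atTop, y + t k • q + (t k ^ 2 / 2) • uk k ∈ P i :=
    frequently_exists.1 (Frequently.of_forall fun k => mem_iUnion.1 (hmem k))
  obtain ⟨φ, hφ, hφi⟩ := extraction_of_frequently_atTop hi
  exact ((hP i).eventually_parabola_mem (fun k => ht0 (φ k)) (ht.comp hφ.tendsto_atTop)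
    (hu.comp hφ.tendsto_atTop) hφi).mono fun s hs => mem_iUnion.2 ⟨i, hs⟩

end Polyhedral

section Taylor

variable {X Y : Type*} [NormedAddCommGroup X] [NormedSpace ℝ X]
  [NormedAddCommGroup Y] [NormedSpace ℝ Y]

theorem hasFDerivAt_half_apply_self {A : X →L[ℝ] X →L[ℝ] Y} (hA : ∀ a b, A a b = A b a)
    (v : X) : HasFDerivAt (fun u => (1 / 2 : ℝ) • A u u) (A v) v := by
  refine ((A.hasFDerivAt_of_bilinear (hasFDerivAt_id v) (hasFDerivAt_id v)).const_smul
    (1 / 2 : ℝ)).congr_fderiv (ContinuousLinearMap.ext fun h => ?_)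
  simp only [smul_apply, add_apply, ContinuousLinearMap.precompR_apply,
    ContinuousLinearMap.precompL_apply, ContinuousLinearMap.compL_apply,
    ContinuousLinearMap.comp_id, ContinuousLinearMap.id_apply, id_eq, hA h v]
  module

theorem TwiceDiffAt.isLittleO_taylor {f : X → Y} {x : X} (hf : TwiceDiffAt f x) :
    (fun v => f (x + v) - f x - fderiv ℝ f x v - (1 / 2 : ℝ) • fderiv ℝ (fderiv ℝ f) x v v)
      =o[𝓝 0] fun v => ‖v‖ ^ 2 := by
  set A := fderiv ℝ (fderiv ℝ f) x
  have hA : ∀ a b, A a b = A b a :=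
    second_derivative_symmetric_of_eventually (hf.1.mono fun y hy => hy.hasFDerivAt)
      hf.2.hasFDerivAt
  refine isLittleO_iff.2 fun ε hε => ?_
  obtain ⟨δ, hδ, hball⟩ := Metric.eventually_nhds_iff_ball.1
    ((hf.2.hasFDerivAt.isLittleO.def hε).and hf.1)
  filter_upwards [ball_mem_nhds 0 hδ] with v hv
  have hseg : ∀ v' ∈ segment ℝ 0 v, ‖v'‖ ≤ ‖v‖ ∧ x + v' ∈ ball x δ := fun v' hv' => by
    have : ‖v'‖ ≤ ‖v‖ := by
      simpa using (convex_closedBall (0 : X) ‖v‖).segment_subset (mem_closedBall_self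
        (norm_nonneg v)) (by simp) hv'
    exact ⟨this, by simpa using this.trans_lt (mem_ball_zero_iff.1 hv)⟩
  have hder : ∀ v' ∈ segment ℝ 0 v, HasFDerivWithinAt
      (fun u => f (x + u) - fderiv ℝ f x u - (1 / 2 : ℝ) • A u u)
      (fderiv ℝ f (x + v') - fderiv ℝ f x - A v') (segment ℝ 0 v) v' := fun v' hv' =>
    ((((hball _ (hseg v' hv').2).2.hasFDerivAt.comp v' ((hasFDerivAt_id v').const_add x)).sub
      (fderiv ℝ f x).hasFDerivAt).sub (hasFDerivAt_half_apply_self hA v')).hasFDerivWithinAt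
  have hbound : ∀ v' ∈ segment ℝ 0 v, ‖fderiv ℝ f (x + v') - fderiv ℝ f x - A v'‖ ≤ ε * ‖v‖ :=
    fun v' hv' => by
      have h := (hball _ (hseg v' hv').2).1
      rw [add_sub_cancel_left] at h
      exact h.trans (mul_le_mul_of_nonneg_left (hseg v' hv').1 hε.le)
  have hmv := (convex_segment (0 : X) v).norm_image_sub_le_of_norm_hasFDerivWithin_le hder
    hbound (left_mem_segment ℝ 0 v) (right_mem_segment ℝ 0 v)
  simp only [add_zero, map_zero, smul_zero, sub_zero] at hmv
  rw [norm_pow, norm_norm, sq, ← mul_assoc]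
  convert hmv using 2
  abel

theorem TwiceDiffAt.isLittleO_parabola {f : X → Y} {x : X} (hf : TwiceDiffAt f x) (w z : X) :
    (fun t : ℝ => f (x + t • w + (t ^ 2 / 2) • z) -
      (f x + t • fderiv ℝ f x w + (t ^ 2 / 2) • (fderiv ℝ f x z + D2 f x w)))
      =o[𝓝 0] fun t => t ^ 2 := by
  set A := fderiv ℝ (fderiv ℝ f) x
  set V : ℝ → X := fun t => t • (w + (t / 2) • z)
  have hV : Tendsto V (𝓝 0) (𝓝 0) := (by fun_prop : Continuous V).tendsto' 0 0 (by simp [V])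
  have hVO : (fun t => ‖V t‖ ^ 2) =O[𝓝 0] fun t : ℝ => t ^ 2 := by
    have : V =O[𝓝 0] fun t : ℝ => t • (1 : ℝ) := (isBigO_refl _ _).smul
      (((by fun_prop : Continuous fun t : ℝ => w + (t / 2) • z).tendsto 0).isBigO_one ℝ)
    simpa using this.norm_left.pow 2
  have hcubic : ∀ n, 2 < n → ∀ c : Y, (fun t : ℝ => t ^ n • c) =o[𝓝 0] fun t => t ^ 2 :=
    fun n hn c => (isBigO_of_le' (c := ‖c‖) (𝓝 0) fun t => by
      rw [norm_smul, mul_comm]).trans_isLittleO (isLittleO_pow_pow hn)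
  -- The Taylor remainder along `V`, plus the terms of order `t³` and `t⁴` of `½ A (V t) (V t)`.
  refine (((hf.isLittleO_taylor.comp_tendsto hV).trans_isBigO hVO).add
    ((hcubic 3 (by norm_num) ((1 / 4 : ℝ) • (A w z + A z w))).add
      (hcubic 4 (by norm_num) ((1 / 8 : ℝ) • A z z)))).congr_left fun t => ?_
  rw [show x + t • w + (t ^ 2 / 2) • z = x + V t by simp only [V]; module]
  simp only [Function.comp_apply, V, D2, map_add, map_smul, add_apply, smul_apply]
  module

end Taylor

section Arc

variable {X : Type*} [NormedAddCommGroup X]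

theorem MSQCAt.isLittleO_infDist_preimage {Y : Type*} [NormedAddCommGroup Y] {f : X → Y}
    {D : Set Y} {x : X} {κ : ℝ} (h : MSQCAt f D x κ) {α : Type*} {l : Filter α} {g : α → X}
    {p : α → Y} {φ : α → ℝ}
    (hg : Tendsto g l (𝓝 x)) (hp : ∀ᶠ a in l, p a ∈ D)
    (hfg : (fun a => f (g a) - p a) =o[l] φ) :
    (fun a => infDist (g a) (f ⁻¹' D)) =o[l] φ := by
  refine (IsBigO.of_bound κ ?_).trans_isLittleO hfg
  filter_upwards [hg.eventually h.2, hp] with a ha hpa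
  rw [Real.norm_of_nonneg infDist_nonneg, ← dist_eq_norm]
  exact ha.trans (mul_le_mul_of_nonneg_left (infDist_le_dist_of_mem hpa) h.1)

theorem exists_isLittleO_sub_of_isLittleO_infDist {Ω : Set X} {x : X} (hx : x ∈ Ω)
    {P : ℝ → X} (hP : (fun t => infDist (P t) Ω) =o[𝓝[>] 0] fun t => t ^ 2) :
    ∃ ξ : ℝ → X, ξ 0 = x ∧ (∀ t, 0 ≤ t → ξ t ∈ Ω) ∧
      (fun t => ξ t - P t) =o[𝓝[>] 0] fun t => t ^ 2 := by
  -- `Ω` need not be closed, so the nearest points are only approximate, up to `t³ = o(t²)`.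
  have hnear : ∀ t : ℝ, 0 < t → ∃ p ∈ Ω, dist (P t) p < infDist (P t) Ω + t ^ 3 :=
    fun t ht => (infDist_lt_iff ⟨x, hx⟩).1 (lt_add_of_pos_right _ (pow_pos ht 3))
  choose! p hpΩ hpdist using hnear
  refine ⟨Function.update p 0 x, by simp, fun t ht => ?_, ?_⟩
  · rcases ht.eq_or_lt with rfl | ht
    · simpa using hx
    · simpa [ht.ne'] using hpΩ t ht
  · have hcube : (fun t : ℝ => t ^ 3) =o[𝓝[>] 0] fun t => t ^ 2 :=
      (isLittleO_pow_pow (by norm_num)).mono nhdsWithin_le_nhds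
    refine (IsBigO.of_bound' ?_).trans_isLittleO (hP.add hcube)
    filter_upwards [self_mem_nhdsWithin] with t (ht : 0 < t)
    rw [Function.update_of_ne ht.ne', ← dist_eq_norm, dist_comm,
      Real.norm_of_nonneg (add_nonneg infDist_nonneg (pow_pos ht 3).le)]
    exact (hpdist t ht).le

variable [NormedSpace ℝ X]

theorem tendsto_of_isLittleO_sub_parabola {ξ : ℝ → X} {x w z : X}
    (h : (fun t => ξ t - (x + t • w + (t ^ 2 / 2) • z)) =o[𝓝[>] 0] fun t => t ^ 2) :
    Tendsto (fun t => t⁻¹ • (ξ t - x)) (𝓝[>] 0) (𝓝 w) ∧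
      Tendsto (fun t => (2 / t ^ 2) • (ξ t - x - t • w)) (𝓝[>] 0) (𝓝 z) := by
  set e := fun t => ξ t - (x + t • w + (t ^ 2 / 2) • z)
  have hsq : (fun t : ℝ => t ^ 2) =O[𝓝[>] 0] fun t => t := by
    simpa using ((isLittleO_pow_pow (𝕜 := ℝ) one_lt_two).isBigO).mono nhdsWithin_le_nhds
  have he₁ : Tendsto (fun t => t⁻¹ • e t) (𝓝[>] 0) (𝓝 0) :=
    (h.trans_isBigO hsq).tendsto_inv_smul_nhds_zero
  have he₂ : Tendsto (fun t => (2 : ℝ) • (t ^ 2)⁻¹ • e t) (𝓝[>] 0) (𝓝 0) := by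
    simpa using h.tendsto_inv_smul_nhds_zero.const_smul (2 : ℝ)
  have hz : Tendsto (fun t : ℝ => (t / 2) • z) (𝓝[>] 0) (𝓝 0) :=
    ((by fun_prop : Continuous fun t : ℝ => (t / 2) • z).tendsto' 0 0 (by simp)).mono_left
      nhdsWithin_le_nhds
  constructor
  · have hlim : Tendsto (fun t => w + ((t / 2) • z + t⁻¹ • e t)) (𝓝[>] 0) (𝓝 w) := by
      simpa using (tendsto_const_nhds (x := w)).add (hz.add he₁)
    refine hlim.congr' ?_
    filter_upwards [self_mem_nhdsWithin] with t (ht : 0 < t)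
    simp only [e, smul_sub, smul_add, smul_smul]
    match_scalars <;> field_simp <;> ring
  · have hlim : Tendsto (fun t => z + (2 : ℝ) • (t ^ 2)⁻¹ • e t) (𝓝[>] 0) (𝓝 z) := by
      simpa using (tendsto_const_nhds (x := z)).add he₂
    refine hlim.congr' ?_
    filter_upwards [self_mem_nhdsWithin] with t (ht : 0 < t)
    simp only [e, smul_sub, smul_add, smul_smul]
    match_scalars <;> field_simp
    ring

theorem mem_secondTangent_of_tendsto {Ω : Set X} {x w z : X} {ξ : ℝ → X}
    (hΩ : ∀ t, 0 < t → ξ t ∈ Ω)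
    (hz : Tendsto (fun t => (2 / t ^ 2) • (ξ t - x - t • w)) (𝓝[>] 0) (𝓝 z)) :
    z ∈ secondTangent Ω x w := by
  have ht : Tendsto (fun k : ℕ => 1 / ((k : ℝ) + 1)) atTop (𝓝[>] 0) :=
    tendsto_nhdsWithin_of_tendsto_nhds_of_eventually_within _
      tendsto_one_div_add_atTop_nhds_zero_nat
      (Eventually.of_forall fun k => mem_Ioi.2 (by positivity))
  refine ⟨_, _, fun k => by positivity, tendsto_nhdsWithin_iff.1 ht |>.1, hz.comp ht,
    fun k => ?_⟩
  convert hΩ _ (by positivity : (0 : ℝ) < 1 / ((k : ℝ) + 1)) using 1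
  simp only [Function.comp_apply, smul_smul]
  rw [div_mul_div_cancel₀ (by positivity), div_self (by positivity), one_smul]
  abel

end Arc

theorem stmt9_general {n m : ℕ} (f : Euc n → Euc m) (ϑ : Euc m → EReal) (xb : Euc n)
    (hf : TwiceDiffAt f xb) (hplq : IsPLQ ϑ) (hdom : ϑ (f xb) ≠ ⊤)
    (κ : ℝ) (hmsqc : MSQCAt f (edom ϑ) xb κ)
    (w z : Euc n)
    (hz : fderiv ℝ f xb z + D2 f xb w ∈
      secondTangent (edom ϑ) (f xb) (fderiv ℝ f xb w)) :
    z ∈ secondTangent (f ⁻¹' edom ϑ) xb w ∧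
    ∃ ε > (0:ℝ), ∃ ξ : ℝ → Euc n,
      (∀ t ∈ Set.Icc (0:ℝ) ε, ξ t ∈ f ⁻¹' edom ϑ) ∧ ξ 0 = xb ∧
      Tendsto (fun t : ℝ => t⁻¹ • (ξ t - xb)) (𝓝[>] (0:ℝ)) (𝓝 w) ∧
      Tendsto (fun t : ℝ => (2 / t ^ 2) • (ξ t - xb - t • w)) (𝓝[>] (0:ℝ)) (𝓝 z) := by
  obtain ⟨R⟩ := hplq
  have harc : ∀ᶠ t in 𝓝[>] (0:ℝ), f xb + t • fderiv ℝ f xb w +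
      (t ^ 2 / 2) • (fderiv ℝ f xb z + D2 f xb w) ∈ edom ϑ := by
    rw [R.dom_eq] at hz ⊢
    exact eventually_parabola_mem_of_mem_secondTangent R.poly hz
  have hparabola : Tendsto (fun t : ℝ => xb + t • w + (t ^ 2 / 2) • z) (𝓝[>] 0) (𝓝 xb) :=
    ((by fun_prop : Continuous fun t : ℝ => xb + t • w + (t ^ 2 / 2) • z).tendsto' 0 xb
      (by simp)).mono_left nhdsWithin_le_nhds
  have hdist := hmsqc.isLittleO_infDist_preimage hparabola harc
    ((hf.isLittleO_parabola w z).mono nhdsWithin_le_nhds)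
  obtain ⟨ξ, hξ0, hξΩ, hξ⟩ := exists_isLittleO_sub_of_isLittleO_infDist hdom hdist
  obtain ⟨hξw, hξz⟩ := tendsto_of_isLittleO_sub_parabola hξ
  exact ⟨mem_secondTangent_of_tendsto (fun t ht => hξΩ t ht.le) hξz, 1, one_pos, ξ,
    fun t ht => hξΩ t ht.1, hξ0, hξw, hξz⟩

/-- chain rule for second-order tangent sets with parabolic arcs. -/
theorem stmt9 {n m : ℕ} (f : Euc n → Euc m) (ϑ : Euc m → EReal) (xb : Euc n)
    (hf : TwiceDiffAt f xb) (hbot : ∀ y, ϑ y ≠ ⊥) (hplq : IsPLQ ϑ)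
    (hconv : ERealConvexOn ϑ) (hdom : ϑ (f xb) ≠ ⊤)
    (κ : ℝ) (hmsqc : MSQCAt f (edom ϑ) xb κ)
    (w z : Euc n) (hw : w ∈ tangentConeB (f ⁻¹' edom ϑ) xb)
    (hz : fderiv ℝ f xb z + D2 f xb w ∈
      secondTangent (edom ϑ) (f xb) (fderiv ℝ f xb w)) :
    z ∈ secondTangent (f ⁻¹' edom ϑ) xb w ∧
    ∃ ε > (0:ℝ), ∃ ξ : ℝ → Euc n,
      (∀ t ∈ Set.Icc (0:ℝ) ε, ξ t ∈ f ⁻¹' edom ϑ) ∧ ξ 0 = xb ∧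
      Tendsto (fun t : ℝ => t⁻¹ • (ξ t - xb)) (𝓝[>] (0:ℝ)) (𝓝 w) ∧
      Tendsto (fun t : ℝ => (2 / t ^ 2) • (ξ t - xb - t • w)) (𝓝[>] (0:ℝ)) (𝓝 z) :=
  stmt9_general f ϑ xb hf hplq hdom κ hmsqc w z hz
end
end
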